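/- arXiv:2110.10025 — 8 statements merged into one kernel-verified Lean document; each statement's English description precedes it below -/
import Mathlib

section
/- Two finite abelian p-groups G and H are isomorphic if and only if for every non-negative integer n the subgroups ℧_n(G) and ℧_n(H) have the same order, where ℧_n(G) = ⟨ g^{p^n} : g ∈ G ⟩. -/
open Finset

private lemma closure_pow_eq_range (K : Type*) [CommGroup K] (k : ℕ) :
    Subgroup.closure {x : K | ∃ g : K, x = g ^ k} = (powMonoidHom k : K →* K).range := by
  have h : {x : K | ∃ g : K, x = g ^ k} = Set.range (powMonoidHom k : K →* K) := by
    ext x; simp [powMonoidHom, eq_comm]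
  rw [h, ← MonoidHom.coe_range, Subgroup.closure_eq]

private lemma card_range_pow_congr {K L : Type*} [CommGroup K] [CommGroup L] (e : K ≃* L)
    (k : ℕ) :
    Nat.card ((powMonoidHom k : K →* K).range) = Nat.card ((powMonoidHom k : L →* L).range) := by
  have h : Subgroup.map e.toMonoidHom (powMonoidHom k : K →* K).range
      = (powMonoidHom k : L →* L).range := by
    ext x
    simp only [Subgroup.mem_map, MonoidHom.mem_range, powMonoidHom_apply]
    constructor
    · rintro ⟨y, ⟨g, rfl⟩, rfl⟩
      exact ⟨e g, (map_pow e g k).symm⟩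
    · rintro ⟨l, rfl⟩
      exact ⟨e.symm l ^ k, ⟨_, rfl⟩, by rw [map_pow]; simp⟩
  rw [← h]
  exact Nat.card_congr (Subgroup.equivMapOfInjective _ _ e.injective).toEquiv

open Finset

private lemma sum_sub_step {ι : Type} [Fintype ι] (a : ι → ℕ) (n : ℕ) :
    ∑ i, (a i - n) = (∑ i, (a i - (n + 1))) + (univ.filter fun i => n < a i).card := by
  classical
  rw [Finset.card_filter, ← Finset.sum_add_distrib]
  refine Finset.sum_congr rfl fun i _ => ?_
  split_ifs with h <;> omega

private lemma count_eq_of_sums {ι κ : Type} [Fintype ι] [Fintype κ] (a : ι → ℕ) (b : κ → ℕ)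
    (ha : ∀ i, 1 ≤ a i) (hb : ∀ j, 1 ≤ b j)
    (h : ∀ n, ∑ i, (a i - n) = ∑ j, (b j - n)) (m : ℕ) :
    (univ.filter fun i => a i = m).card = (univ.filter fun j => b j = m).card := by
  classical
  have hT : ∀ n, (univ.filter fun i => n < a i).card = (univ.filter fun j => n < b j).card := by
    intro n
    have h1 := h n
    have h2 := h (n + 1)
    have sa := sum_sub_step a n
    have sb := sum_sub_step b n
    omega
  rcases Nat.eq_zero_or_pos m with rfl | hm
  · rw [Finset.filter_eq_empty_iff.2 (fun i _ => by have := ha i; omega),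
      Finset.filter_eq_empty_iff.2 (fun j _ => by have := hb j; omega)]
    rfl
  · have split : ∀ {α : Type} [Fintype α] (c : α → ℕ),
        (univ.filter fun i => m - 1 < c i).card
          = (univ.filter fun i => c i = m).card + (univ.filter fun i => m < c i).card := by
      intro α _ c
      classical
      rw [Finset.card_filter, Finset.card_filter, Finset.card_filter, ← Finset.sum_add_distrib]
      refine Finset.sum_congr rfl fun i _ => ?_
      split_ifs <;> omega
    have h1 := hT (m - 1)
    have h2 := hT m
    have s1 := split a
    have s2 := split b
    omega

private lemma exists_equiv_of_counts {ι κ : Type} [Fintype ι] [Fintype κ] (a : ι → ℕ) (b : κ → ℕ)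
    (h : ∀ m, (univ.filter fun i => a i = m).card = (univ.filter fun j => b j = m).card) :
    ∃ e : ι ≃ κ, ∀ i, a i = b (e i) := by
  classical
  have fib : ∀ m : ℕ, {i // a i = m} ≃ {j // b j = m} := fun m =>
    Fintype.equivOfCardEq (by simpa [Fintype.card_subtype] using h m)
  refine ⟨(Equiv.sigmaFiberEquiv a).symm.trans
    ((Equiv.sigmaCongrRight fib).trans (Equiv.sigmaFiberEquiv b)), fun i => ?_⟩
  exact (fib (a i) ⟨i, rfl⟩).2.symm

private def mulPiCongrLeft' {α β : Type*} (e : α ≃ β) (P : α → Type*) [∀ a, CommGroup (P a)] :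
    ((a : α) → P a) ≃* ((b : β) → P (e.symm b)) :=
  { Equiv.piCongrLeft' P e with map_mul' := fun _ _ => rfl }

private def congrM (M : ℕ → Type*) [∀ t, CommGroup (M t)] {s t : ℕ} (h : s = t) :
    M s ≃* M t := by subst h; exact MulEquiv.refl _

private def prodIsoOfEquiv {ι κ : Type} (e : ι ≃ κ) (M : ℕ → Type*) [∀ t, CommGroup (M t)]
    (a : ι → ℕ) (b : κ → ℕ) (hab : ∀ i, a i = b (e i)) :
    ((i : ι) → M (a i)) ≃* ((j : κ) → M (b j)) :=
  (mulPiCongrLeft' e (fun i => M (a i))).trans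
    (MulEquiv.piCongrRight fun j =>
      congrM M (by rw [hab (e.symm j), e.apply_symm_apply]))

open Finset

private lemma card_range_pow_pi {ι : Type} [Fintype ι] (M : ι → Type*) [∀ i, CommGroup (M i)]
    (k : ℕ) :
    Nat.card ((powMonoidHom k : (∀ i, M i) →* (∀ i, M i)).range)
      = ∏ i, Nat.card ((powMonoidHom k : M i →* M i).range) := by
  classical
  have h : ((powMonoidHom k : (∀ i, M i) →* (∀ i, M i)).range)
      = Subgroup.pi Set.univ (fun i => (powMonoidHom k : M i →* M i).range) := by
    ext x
    simp only [MonoidHom.mem_range, powMonoidHom_apply, Subgroup.mem_pi, Set.mem_univ,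
      forall_true_left]
    constructor
    · rintro ⟨g, rfl⟩ i
      exact ⟨g i, rfl⟩
    · intro hx
      choose g hg using hx
      exact ⟨g, funext fun i => hg i⟩
  rw [h, ← Nat.card_pi]
  exact Nat.card_congr
    ⟨fun x i => ⟨x.1 i, x.2 i (Set.mem_univ i)⟩,
     fun y => ⟨fun i => (y i).1, fun i _ => (y i).2⟩,
     fun x => rfl, fun y => rfl⟩

private lemma card_range_pow_zmod (m k : ℕ) (hm : m ≠ 0) :
    Nat.card ((powMonoidHom k : Multiplicative (ZMod m) →* Multiplicative (ZMod m)).range)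
      = m / m.gcd k := by
  have key : ∀ x : Multiplicative (ZMod m),
      x ∈ (powMonoidHom k : Multiplicative (ZMod m) →* Multiplicative (ZMod m)).range
        ↔ x.toAdd ∈ AddSubgroup.zmultiples ((k : ZMod m)) := by
    intro x
    simp only [MonoidHom.mem_range, powMonoidHom_apply, AddSubgroup.mem_zmultiples_iff]
    constructor
    · rintro ⟨g, rfl⟩
      obtain ⟨z, hz⟩ := ZMod.intCast_surjective (g.toAdd)
      refine ⟨z, ?_⟩
      rw [zsmul_eq_mul, hz, toAdd_pow, nsmul_eq_mul, mul_comm]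
    · rintro ⟨z, hz⟩
      refine ⟨Multiplicative.ofAdd ((z : ZMod m)), ?_⟩
      have : (Multiplicative.ofAdd ((z : ZMod m)) ^ k).toAdd = x.toAdd := by
        rw [toAdd_pow, toAdd_ofAdd, nsmul_eq_mul, ← hz, zsmul_eq_mul, mul_comm]
      exact Multiplicative.toAdd.injective this
  have e : ((powMonoidHom k : Multiplicative (ZMod m) →* Multiplicative (ZMod m)).range)
      ≃ (AddSubgroup.zmultiples ((k : ZMod m))) :=
    Equiv.subtypeEquiv Multiplicative.toAdd key
  rw [Nat.card_congr e, Nat.card_zmultiples, ZMod.addOrderOf_coe k hm]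

private lemma card_range_pow_zmod_pow {p : ℕ} (hp : p.Prime) (a n : ℕ) :
    Nat.card ((powMonoidHom (p ^ n) :
        Multiplicative (ZMod (p ^ a)) →* Multiplicative (ZMod (p ^ a))).range)
      = p ^ (a - n) := by
  rw [card_range_pow_zmod _ _ (pow_ne_zero a hp.pos.ne')]
  rcases le_total n a with h | h
  · rw [Nat.gcd_eq_right (pow_dvd_pow p h), Nat.pow_div h hp.pos]
  · rw [Nat.gcd_eq_left (pow_dvd_pow p h), Nat.div_self (pow_pos hp.pos a),
      Nat.sub_eq_zero_of_le h, pow_zero]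

private lemma decomp_pGroup (p : ℕ) (hp : p.Prime) (K : Type*) [CommGroup K] [Finite K]
    (hK : IsPGroup p K) :
    ∃ (ι : Type) (_ : Fintype ι) (a : ι → ℕ), (∀ i, 1 ≤ a i) ∧
      Nonempty (K ≃* ((i : ι) → Multiplicative (ZMod (p ^ a i)))) := by
  haveI : Fact p.Prime := ⟨hp⟩
  obtain ⟨ι, hι, nn, h1, ⟨eK⟩⟩ := CommGroup.equiv_prod_multiplicative_zmod_of_finite K
  obtain ⟨k, hk⟩ := IsPGroup.iff_card.mp hK
  have hcardK : Nat.card K = ∏ i, nn i := by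
    rw [Nat.card_congr eK.toEquiv, Nat.card_pi]
    exact Finset.prod_congr rfl fun i _ => by
      rw [Nat.card_congr Multiplicative.toAdd, Nat.card_zmod]
  have hdvd : ∀ i, nn i ∣ p ^ k := by
    intro i
    rw [← hk, hcardK]
    exact Finset.dvd_prod_of_mem nn (Finset.mem_univ i)
  choose a hle hnn using fun i => (Nat.dvd_prime_pow hp).mp (hdvd i)
  refine ⟨ι, hι, a, fun i => ?_, ⟨eK.trans (MulEquiv.piCongrRight fun i =>
    congrM (fun t => Multiplicative (ZMod t)) (hnn i))⟩⟩
  by_contra hcon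
  have h0 : a i = 0 := by omega
  have h2 := h1 i
  rw [hnn i, h0, pow_zero] at h2
  omega

private lemma key_card (p : ℕ) (hp : p.Prime) {ι₀ : Type} [Fintype ι₀] (c : ι₀ → ℕ)
    {K : Type*} [CommGroup K]
    (e : K ≃* ((i : ι₀) → Multiplicative (ZMod (p ^ c i)))) (n : ℕ) :
    Nat.card (Subgroup.closure {x : K | ∃ g : K, x = g ^ (p ^ n)})
      = p ^ (∑ i, (c i - n)) := by
  rw [closure_pow_eq_range, card_range_pow_congr e (p ^ n), card_range_pow_pi,
    ← Finset.prod_pow_eq_pow_sum]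
  exact Finset.prod_congr rfl fun i _ => card_range_pow_zmod_pow hp (c i) n

theorem abelian_pGroup_iso_iff_power_subgroup_cards
    (p : ℕ) [Fact p.Prime]
    (G H : Type*) [CommGroup G] [CommGroup H] [Finite G] [Finite H]
    (hG : IsPGroup p G) (hH : IsPGroup p H) :
    Nonempty (G ≃* H) ↔
      ∀ n : ℕ,
        Nat.card (Subgroup.closure {x : G | ∃ g : G, x = g ^ (p ^ n)}) =
          Nat.card (Subgroup.closure {x : H | ∃ h : H, x = h ^ (p ^ n)}) := by
  classical
  have hp : p.Prime := Fact.out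
  constructor
  · rintro ⟨e⟩ n
    rw [closure_pow_eq_range, closure_pow_eq_range]
    exact card_range_pow_congr e (p ^ n)
  · intro hcards
    obtain ⟨ι, _, a, ha, ⟨eG⟩⟩ := decomp_pGroup p hp G hG
    obtain ⟨κ, _, b, hb, ⟨eH⟩⟩ := decomp_pGroup p hp H hH
    have hsums : ∀ n, ∑ i, (a i - n) = ∑ j, (b j - n) := by
      intro n
      have h := hcards n
      rw [key_card p hp a eG n, key_card p hp b eH n] at h
      exact Nat.pow_right_injective hp.two_le h
    obtain ⟨e, he⟩ := exists_equiv_of_counts a b (count_eq_of_sums a b ha hb hsums)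
    exact ⟨eG.trans ((prodIsoOfEquiv e (fun t => Multiplicative (ZMod (p ^ t))) a b he).trans
      eH.symm)⟩
end

section
/- Let G be a finite abelian p-group, F a field of characteristic p, and let m, n be non-negative integers. Then Δ(F ℧_m(Ω_n(G)))·FG = ℧_m(Ω_n(FG))·FG, i.e. the ideal of FG generated by { g^{p^m} − 1 : g ∈ G, g^{p^n} = 1 } equals the ideal generated by the p^m-th powers of the elements x ∈ FG with x^{p^n} = 0. -/
/-!
`⊆`: for `g ∈ Ω_n(G)` we have `(g - 1) ^ p ^ m = g ^ p ^ m - 1` and `(g - 1) ^ p ^ n = 0`.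

`⊇`: in characteristic `p`, `(∑ a_g g) ^ p ^ k = ∑ a_g ^ p ^ k g ^ p ^ k`. If `x ^ p ^ n = 0`,
then, since `g ↦ g ^ p ^ n` is injective on `G ⧸ Ω_n(G)` and Frobenius is injective on the
(reduced) coefficients, the image of `x` in `R[G ⧸ Ω_n(G)]` vanishes, and the same holds for
`y = ∑ a_g ^ p ^ m g`. Any element with vanishing image in `R[G ⧸ K]` lies in `Δ(RK)·RG`, and
the ring map induced by `g ↦ g ^ p ^ m` carries `y` to `x ^ p ^ m` and `Δ(R Ω_n(G))·RG` into
`Δ(R ℧_m(Ω_n(G)))·RG`.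
-/

namespace MonoidAlgebra

section AugIdeal

variable (R : Type*) {G H : Type*} [Ring R] [Group G] [Group H]

/-- `Δ(RK)·RG` in the paper's notation. -/
noncomputable def augIdeal (K : Subgroup G) : Ideal (MonoidAlgebra R G) :=
  Ideal.span {a | ∃ k ∈ K, a = of R G k - 1}

variable {R} {K : Subgroup G}

lemma of_sub_one_mem_augIdeal {k : G} (hk : k ∈ K) : of R G k - 1 ∈ augIdeal R K :=
  Ideal.subset_span ⟨k, hk, rfl⟩

lemma single_sub_single_mem_augIdeal {g g' : G} (h : g⁻¹ * g' ∈ K) (r : R) :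
    single g' r - single g r ∈ augIdeal R K := by
  have : single g' r - single g r = single g r * (of R G (g⁻¹ * g') - 1) := by
    rw [mul_sub, mul_one, of_apply, single_mul_single, mul_inv_cancel_left, mul_one]
  rw [this]
  exact Ideal.mul_mem_left _ _ (of_sub_one_mem_augIdeal h)

lemma mapDomain_sub_mem_augIdeal {f : G → G} (hf : ∀ g, g⁻¹ * f g ∈ K)
    (x : MonoidAlgebra R G) : mapDomain f x - x ∈ augIdeal R K := by
  induction x using induction_linear with
  | zero => simp [mapDomain_zero]
  | add x y hx hy => rw [mapDomain_add, add_sub_add_comm]; exact add_mem hx hy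
  | single g r => rw [mapDomain_single]; exact single_sub_single_mem_augIdeal (hf g) r

lemma mem_augIdeal_of_mapDomain_mk_eq_zero {x : MonoidAlgebra R G}
    (hx : mapDomain (QuotientGroup.mk : G → G ⧸ K) x = 0) : x ∈ augIdeal R K := by
  have hout : mapDomain (fun g : G => (g : G ⧸ K).out) x = 0 := by
    change mapDomain (Quotient.out ∘ (QuotientGroup.mk : G → G ⧸ K)) x = 0
    simp only [mapDomain, ofCoeff_eq_zero] at hx ⊢
    rw [Finsupp.mapDomain_comp, hx, Finsupp.mapDomain_zero]
  have hmem : ∀ g : G, g⁻¹ * (g : G ⧸ K).out ∈ K := fun g => by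
    obtain ⟨k, hk⟩ := QuotientGroup.mk_out_eq_mul K g
    simp [hk]
  simpa [hout] using mapDomain_sub_mem_augIdeal hmem x

lemma augIdeal_le_comap_map (f : G →* H) :
    augIdeal R K ≤ (augIdeal R (K.map f)).comap (mapDomainRingHom R f) := by
  refine Ideal.span_le.mpr ?_
  rintro _ ⟨k, hk, rfl⟩
  change mapDomainRingHom R f (of R G k - 1) ∈ augIdeal R (K.map f)
  rw [map_sub, map_one]
  simpa using of_sub_one_mem_augIdeal (R := R) (Subgroup.mem_map_of_mem f hk)

end AugIdeal

section Frobenius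

variable {R G : Type*} (p : ℕ)

instance expChar [Semiring R] [Monoid G] [ExpChar R p] : ExpChar (MonoidAlgebra R G) p :=
  expChar_of_injective_ringHom (f := singleOneRingHom) single_right_injective p

lemma of_sub_one_pow_expChar_pow [Ring R] [Monoid G] [ExpChar R p] (g : G) (n : ℕ) :
    (of R G g - 1) ^ p ^ n = of R G (g ^ p ^ n) - 1 := by
  rw [sub_pow_expChar_pow_of_commute _ _ (Commute.one_right _), one_pow, map_pow]

variable [CommRing R] [ExpChar R p]

lemma pow_expChar_pow [CommMonoid G] (x : MonoidAlgebra R G) (n : ℕ) :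
    x ^ p ^ n = mapDomain (· ^ p ^ n) (map (iterateFrobenius R p n) x) := by
  have : iterateFrobenius (MonoidAlgebra R G) p n =
      (mapDomainRingHom R (powMonoidHom (p ^ n))).comp
        (mapRingHom G (iterateFrobenius R p n)) := by
    ext <;> simp [iterateFrobenius_def, single_pow]
  exact congr($this x)

variable [IsReduced R] [CommGroup G]

lemma mapDomain_mk_ker_powMonoidHom_eq_zero {x : MonoidAlgebra R G} {n : ℕ}
    (hx : x ^ p ^ n = 0) :
    mapDomain (QuotientGroup.mk : G → G ⧸ (powMonoidHom (p ^ n) : G →* G).ker) x = 0 := by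
  set f : G →* G := powMonoidHom (p ^ n)
  have hf : mapDomainRingHom R f = (mapDomainRingHom R (QuotientGroup.kerLift f)).comp
      (mapDomainRingHom R (QuotientGroup.mk' f.ker)) := by
    rw [← mapDomainRingHom_comp]; rfl
  rw [pow_expChar_pow, ← coe_mapRingHom] at hx
  change mapDomainRingHom R f _ = 0 at hx
  rw [hf, RingHom.comp_apply, ← map_zero (mapDomainRingHom R (QuotientGroup.kerLift f))] at hx
  have hfrob := mapDomain_injective (QuotientGroup.kerLift_injective f) hx
  rw [← RingHom.comp_apply, ← mapRingHom_comp_mapDomainRingHom, RingHom.comp_apply,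
    ← map_zero (mapRingHom _ (iterateFrobenius R p n))] at hfrob
  exact map_injective _ (iterateFrobenius_inj R p n) hfrob

theorem augIdeal_map_ker_powMonoidHom (m n : ℕ) :
    augIdeal R (((powMonoidHom (p ^ n) : G →* G).ker).map (powMonoidHom (p ^ m))) =
      Ideal.span {a | ∃ x : MonoidAlgebra R G, x ^ p ^ n = 0 ∧ a = x ^ p ^ m} := by
  refine le_antisymm (Ideal.span_le.mpr ?_) (Ideal.span_le.mpr ?_)
  · rintro _ ⟨_, ⟨g, hg, rfl⟩, rfl⟩
    refine Ideal.subset_span ⟨of R G g - 1, ?_, (of_sub_one_pow_expChar_pow p g m).symm⟩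
    rw [of_sub_one_pow_expChar_pow, show g ^ p ^ n = 1 from hg, map_one, sub_self]
  · rintro _ ⟨x, hx, rfl⟩
    rw [pow_expChar_pow]
    apply augIdeal_le_comap_map
    apply mem_augIdeal_of_mapDomain_mk_eq_zero
    apply mapDomain_mk_ker_powMonoidHom_eq_zero p
    rw [← coe_mapRingHom, ← map_pow, hx, map_zero]

end Frobenius

end MonoidAlgebra

theorem aug_ideal_power_omega_eq_general
    (p : ℕ) [Fact p.Prime] (F : Type*) [Field F] [CharP F p]
    (G : Type*) [CommGroup G]
    (m n : ℕ) :
    Ideal.span {a : MonoidAlgebra F G |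
        ∃ k ∈ Subgroup.closure {x : G | ∃ g : G, g ^ (p ^ n) = 1 ∧ x = g ^ (p ^ m)},
          a = MonoidAlgebra.of F G k - 1} =
      Ideal.span {a : MonoidAlgebra F G |
        ∃ x : MonoidAlgebra F G, x ^ (p ^ n) = 0 ∧ a = x ^ (p ^ m)} := by
  have hclosure : Subgroup.closure {x : G | ∃ g : G, g ^ (p ^ n) = 1 ∧ x = g ^ (p ^ m)} =
      ((powMonoidHom (p ^ n) : G →* G).ker).map (powMonoidHom (p ^ m)) := by
    rw [← Subgroup.closure_eq (Subgroup.map _ _), Subgroup.coe_map]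
    congr 1
    ext x
    simp [eq_comm]
  rw [hclosure]
  exact MonoidAlgebra.augIdeal_map_ker_powMonoidHom p m n

theorem aug_ideal_power_omega_eq
    (p : ℕ) [Fact p.Prime] (F : Type*) [Field F] [CharP F p]
    (G : Type*) [CommGroup G] [Finite G] (hG : IsPGroup p G)
    (m n : ℕ) :
    Ideal.span {a : MonoidAlgebra F G |
        ∃ k ∈ Subgroup.closure {x : G | ∃ g : G, g ^ (p ^ n) = 1 ∧ x = g ^ (p ^ m)},
          a = MonoidAlgebra.of F G k - 1} =
      Ideal.span {a : MonoidAlgebra F G |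
        ∃ x : MonoidAlgebra F G, x ^ (p ^ n) = 0 ∧ a = x ^ (p ^ m)} :=
  aug_ideal_power_omega_eq_general p F G m n
end

section
/- Let G be a finite p-group and write it as an internal direct product G = K × L of normal subgroups K and L. Let F be a field and Δ = Δ(FG) the augmentation ideal. Then for every positive integer n, Δ^n = Δ(FK)·Δ^{n−1} ⊕ Δ(FL)^n, where Δ(FK) is the ideal of FG generated by { k − 1 : k ∈ K } and Δ(FL)^n is the n-th power of the augmentation ideal of FL viewed inside FG. -/
/-!
Writing `g = k * l` gives `g - 1 = (k - 1) * l + (l - 1)`, so `Δ = Δ(FK) + Δ(FL)`. Multiplying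
the case `n` on the left by this decomposition gives the case `n + 1`, because
`Δ(FL) Δ(FK) ⊆ Δ(FK) Δ(FL)` (elements of `K` and `L` commute) and `Δ(FL) FG ⊆ Δ`.
The sum is direct: the retraction `G → L` with kernel `K` induces an algebra endomorphism of `FG`
that kills `Δ(FK)` and fixes `Δ(FL)^n` pointwise.
-/

open MonoidAlgebra Submodule Pointwise

namespace Submodule

variable {R A : Type*} [CommSemiring R] [Semiring A] [Algebra R A]

theorem pow_succ_eq_mul_top_mul_pow_sup_pow {I J D : Submodule R A} (hD : D = I * ⊤ ⊔ J)
    (hJ : J * ⊤ ≤ D) (hJI : J * I ≤ I * J) (n : ℕ) :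
    D ^ (n + 1) = I * ⊤ * D ^ n ⊔ J ^ (n + 1) := by
  have hID : I * ⊤ ≤ D := le_sup_left.trans_eq hD.symm
  have hJD : J ≤ D := (mul_one J).symm.le.trans ((mul_le_mul_right le_top J).trans hJ)
  refine le_antisymm ?_ (sup_le ?_ (pow_le_pow_left' hJD _))
  · induction n with
    | zero => simpa using hD.le
    | succ n ih =>
      have hJID : J * (I * ⊤ * D ^ n) ≤ I * ⊤ * D ^ (n + 1) := calc
        J * (I * ⊤ * D ^ n) = J * I * (⊤ * D ^ n) := by simp only [mul_assoc]
        _ ≤ I * J * (⊤ * D ^ n) := mul_le_mul_left hJI _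
        _ = I * (J * ⊤) * D ^ n := by simp only [mul_assoc]
        _ ≤ I * D * D ^ n := mul_le_mul_left (mul_le_mul_right hJ I) _
        _ = I * (1 * D ^ (n + 1)) := by rw [one_mul, pow_succ', mul_assoc]
        _ ≤ I * ⊤ * D ^ (n + 1) := by
          rw [mul_assoc]; exact mul_le_mul_right (mul_le_mul_left le_top _) I
      calc D ^ (n + 2) = I * ⊤ * D ^ (n + 1) ⊔ J * D ^ (n + 1) := by
            rw [pow_succ' D (n + 1)]; nth_rewrite 1 [hD]; rw [sup_mul]
        _ ≤ I * ⊤ * D ^ (n + 1) ⊔ (J * (I * ⊤ * D ^ n) ⊔ J ^ (n + 2)) := by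
            rw [pow_succ' J (n + 1), ← mul_sup]; exact sup_le_sup_left (mul_le_mul_right ih J) _
        _ ≤ I * ⊤ * D ^ (n + 1) ⊔ J ^ (n + 2) :=
            sup_le le_sup_left (sup_le (hJID.trans le_sup_left) le_sup_right)
  · rw [pow_succ']
    exact mul_le_mul_left hID _

theorem mul_inf_eq_bot_of_algHom (π : A →ₐ[R] A) {I N : Submodule R A}
    (hI : I.map π.toLinearMap = ⊥) (hN : ∀ x ∈ N, π x = x) (M : Submodule R A) :
    I * M ⊓ N = ⊥ := by
  refine eq_bot_iff.2 fun x ⟨hxI, hxN⟩ => ?_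
  have : π x ∈ (I * M).map π.toLinearMap := mem_map_of_mem hxI
  rwa [Submodule.map_mul, hI, bot_mul, mem_bot, hN x hxN] at this

theorem pow_le_toSubmodule {J : Submodule R A} {S : Subalgebra R A}
    (h : J ≤ Subalgebra.toSubmodule S) : ∀ n : ℕ, J ^ n ≤ Subalgebra.toSubmodule S
  | 0 => by rw [pow_zero, one_le]; exact S.one_mem
  | n + 1 => by
    rw [pow_succ]
    exact (mul_le_mul' (pow_le_toSubmodule h n) h).trans
      ((Subalgebra.mul_toSubmodule_le S S).trans_eq (by rw [sup_idem]))

end Submodule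

theorem Subgroup.IsComplement'.exists_retraction {G : Type*} [Group G] {H N : Subgroup G}
    [N.Normal] (h : H.IsComplement' N) :
    ∃ ρ : G →* G, N ≤ ρ.ker ∧ ∀ g ∈ H, ρ g = g := by
  refine ⟨H.subtype.comp (h.QuotientMulEquiv.toMonoidHom.comp (QuotientGroup.mk' N)), ?_, ?_⟩
  · intro g hg
    rw [MonoidHom.mem_ker, MonoidHom.comp_apply, MonoidHom.comp_apply, QuotientGroup.mk'_apply,
      (QuotientGroup.eq_one_iff g).2 hg, map_one, map_one]
  · intro g hg
    have : ((g : G) : G ⧸ N) = h.QuotientMulEquiv.symm ⟨g, hg⟩ := rfl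
    simp [this]

namespace MonoidAlgebra

variable (R : Type*) [CommRing R] {G : Type*} [Group G]

noncomputable def augmentationSpan (S : Subgroup G) : Submodule R (MonoidAlgebra R G) :=
  span R {a | ∃ g ∈ S, a = of R G g - 1}

variable {R}

theorem of_sub_one_mem_augmentationSpan {S : Subgroup G} {g : G} (hg : g ∈ S) :
    of R G g - 1 ∈ augmentationSpan R S :=
  subset_span ⟨g, hg, rfl⟩

theorem augmentationSpan_mono {S T : Subgroup G} (h : S ≤ T) :
    augmentationSpan R S ≤ augmentationSpan R T :=
  span_mono fun _ ⟨g, hg, hx⟩ => ⟨g, h hg, hx⟩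

theorem augmentationSpan_top :
    augmentationSpan R (⊤ : Subgroup G) = span R {a | ∃ g : G, a = of R G g - 1} := by
  simp [augmentationSpan]

theorem augmentationSpan_bot : augmentationSpan R (⊥ : Subgroup G) = ⊥ := by
  simp [augmentationSpan, one_def]

theorem of_sub_one_mul_of (g h : G) :
    (of R G g - 1) * of R G h = (of R G (g * h) - 1) - (of R G h - 1) := by
  rw [sub_mul, one_mul, map_mul]; abel

theorem augmentationSpan_mul_top_le (S : Subgroup G) :
    augmentationSpan R S * ⊤ ≤ augmentationSpan R ⊤ := by
  refine mul_le.2 fun a ha b _ => ?_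
  induction b using MonoidAlgebra.induction_on with
  | of h =>
    have : augmentationSpan R S ≤
        (augmentationSpan R ⊤).comap (LinearMap.mulRight R (of R G h)) :=
      span_le.2 fun _ ⟨g, _, hx⟩ => by
        rw [hx, SetLike.mem_coe, mem_comap, LinearMap.mulRight_apply, of_sub_one_mul_of]
        exact sub_mem (of_sub_one_mem_augmentationSpan trivial)
          (of_sub_one_mem_augmentationSpan trivial)
    exact this ha
  | add x y hx hy => rw [mul_add]; exact add_mem (hx trivial) (hy trivial)
  | smul r x hx => rw [mul_smul_comm]; exact smul_mem _ r (hx trivial)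

theorem augmentationSpan_top_eq_mul_top_sup {H N : Subgroup G} [N.Normal] (h : H ⊔ N = ⊤) :
    augmentationSpan R ⊤ = augmentationSpan R H * ⊤ ⊔ augmentationSpan R N := by
  refine le_antisymm (span_le.2 ?_)
    (sup_le (augmentationSpan_mul_top_le H) (augmentationSpan_mono le_top))
  rintro _ ⟨g, -, rfl⟩
  have hg : g ∈ (H : Set G) * (N : Set G) := by rw [← Subgroup.mul_normal, h]; trivial
  obtain ⟨x, hx, y, hy, rfl⟩ := hg
  have : of R G (x * y) - 1 = (of R G x - 1) * of R G y + (of R G y - 1) := by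
    rw [of_sub_one_mul_of]; abel
  rw [SetLike.mem_coe, this]
  exact add_mem (mem_sup_left (mul_mem_mul (of_sub_one_mem_augmentationSpan hx) trivial))
    (mem_sup_right (of_sub_one_mem_augmentationSpan hy))

theorem augmentationSpan_mul_comm {H N : Subgroup G} (h : ∀ x ∈ H, ∀ y ∈ N, Commute x y) :
    augmentationSpan R H * augmentationSpan R N = augmentationSpan R N * augmentationSpan R H := by
  refine mul_comm_of_commute fun a ha b hb => Commute.span_left (fun _ hx' => ?_) a ha
  obtain ⟨x, hx, rfl⟩ := hx'
  refine Commute.span_right (fun _ hy' => ?_) b hb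
  obtain ⟨y, hy, rfl⟩ := hy'
  exact (((h x hx y hy).map (of R G)).sub_right (Commute.one_right _)).sub_left
    ((Commute.one_left _).sub_right (Commute.one_right _))

theorem mapDomainAlgHom_of_sub_one {G' : Type*} [Group G'] (f : G →* G') (g : G) :
    mapDomainAlgHom R R f (of R G g - 1) = of R G' (f g) - 1 := by
  rw [map_sub, map_one, mapDomainAlgHom_apply, of_apply, of_apply, mapDomain_single]

theorem map_augmentationSpan {G' : Type*} [Group G'] (f : G →* G') (S : Subgroup G) :
    (augmentationSpan R S).map (mapDomainAlgHom R R f).toLinearMap =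
      augmentationSpan R (S.map f) := by
  rw [augmentationSpan, map_span]
  congr 1
  ext a
  constructor
  · rintro ⟨_, ⟨g, hg, rfl⟩, rfl⟩
    exact ⟨f g, ⟨g, hg, rfl⟩, mapDomainAlgHom_of_sub_one f g⟩
  · rintro ⟨_, ⟨g, hg, rfl⟩, rfl⟩
    exact ⟨_, ⟨g, hg, rfl⟩, mapDomainAlgHom_of_sub_one f g⟩

theorem mapDomainAlgHom_eq_self_of_mem_pow {f : G →* G} {S : Subgroup G}
    (hf : ∀ g ∈ S, f g = g) (n : ℕ) :
    ∀ x ∈ augmentationSpan R S ^ n, mapDomainAlgHom R R f x = x :=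
  pow_le_toSubmodule (S := AlgHom.equalizer (mapDomainAlgHom R R f) (AlgHom.id R _))
    (span_le.2 <| by
      rintro _ ⟨g, hg, rfl⟩
      show mapDomainAlgHom R R f (of R G g - 1) = of R G g - 1
      rw [mapDomainAlgHom_of_sub_one, hf g hg]) n

end MonoidAlgebra

theorem aug_power_decomposition_direct_product_general
    (F : Type*) [Field F]
    (G : Type*) [Group G]
    (K L : Subgroup G) [K.Normal] [L.Normal]
    (hKL : K ⊓ L = ⊥) (hKL' : K ⊔ L = ⊤) (n : ℕ) (hn : 0 < n) :
    let Δ : Submodule F (MonoidAlgebra F G) :=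
      Submodule.span F {a | ∃ g : G, a = MonoidAlgebra.of F G g - 1}
    let DK : Submodule F (MonoidAlgebra F G) :=
      Submodule.span F {a | ∃ k ∈ K, a = MonoidAlgebra.of F G k - 1} * ⊤
    let DL : Submodule F (MonoidAlgebra F G) :=
      Submodule.span F {a | ∃ l ∈ L, a = MonoidAlgebra.of F G l - 1}
    Δ ^ n = DK * Δ ^ (n - 1) ⊔ DL ^ n ∧ (DK * Δ ^ (n - 1)) ⊓ DL ^ n = ⊥ := by
  intro Δ DK DL
  have hΔ : Δ = augmentationSpan F (⊤ : Subgroup G) := augmentationSpan_top.symm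
  have hcomm : DL * augmentationSpan F K = augmentationSpan F K * DL :=
    augmentationSpan_mul_comm fun x hx y hy => (Subgroup.commute_of_normal_of_disjoint
      K L ‹_› ‹_› (disjoint_iff.2 hKL) y x hy hx).symm
  have hLK : L.IsComplement' K := Subgroup.isComplement'_of_disjoint_and_mul_eq_univ
    (disjoint_iff.2 hKL).symm
    (by rw [← Subgroup.mul_normal, sup_comm, hKL', Subgroup.coe_top])
  obtain ⟨ρ, hρK, hρL⟩ := hLK.exists_retraction
  obtain ⟨m, rfl⟩ := Nat.exists_eq_add_one_of_ne_zero hn.ne'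
  rw [Nat.add_sub_cancel]
  refine ⟨pow_succ_eq_mul_top_mul_pow_sup_pow (hΔ ▸ augmentationSpan_top_eq_mul_top_sup hKL')
    (hΔ ▸ augmentationSpan_mul_top_le L) hcomm.le m,
    mul_inf_eq_bot_of_algHom (mapDomainAlgHom F F ρ) ?_
      (mapDomainAlgHom_eq_self_of_mem_pow hρL _) _⟩
  change (augmentationSpan F K * ⊤).map _ = ⊥
  rw [Submodule.map_mul, map_augmentationSpan, (Subgroup.map_eq_bot_iff _).2 hρK,
    augmentationSpan_bot, bot_mul]

theorem aug_power_decomposition_direct_product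
    (p : ℕ) [Fact p.Prime] (F : Type*) [Field F]
    (G : Type*) [Group G] [Finite G] (hG : IsPGroup p G)
    (K L : Subgroup G) [K.Normal] [L.Normal]
    (hKL : K ⊓ L = ⊥) (hKL' : K ⊔ L = ⊤) (n : ℕ) (hn : 0 < n) :
    let Δ : Submodule F (MonoidAlgebra F G) :=
      Submodule.span F {a | ∃ g : G, a = MonoidAlgebra.of F G g - 1}
    let DK : Submodule F (MonoidAlgebra F G) :=
      Submodule.span F {a | ∃ k ∈ K, a = MonoidAlgebra.of F G k - 1} * ⊤
    let DL : Submodule F (MonoidAlgebra F G) :=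
      Submodule.span F {a | ∃ l ∈ L, a = MonoidAlgebra.of F G l - 1}
    Δ ^ n = DK * Δ ^ (n - 1) ⊔ DL ^ n ∧ (DK * Δ ^ (n - 1)) ⊓ DL ^ n = ⊥ :=
  aug_power_decomposition_direct_product_general F G K L hKL hKL' n hn
end

section
/- Let G be a finite p-group and F a field of characteristic p. Then Δ(F Soc(G))·FG + Δ(FG)^2 = Ω_1(Z(FG)) + Δ(FG)^2, where Soc(G) = Ω_1(Z(G)) is the socle of G and Ω_1(Z(FG)) = { x ∈ Z(FG) : x^p = 0 }. -/
/-!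
Work modulo `I = Dsoc + Δ²`. Modulo `Δ²` conjugate group elements agree, because
`cgc⁻¹ - g` is the commutator of `c` and `gc⁻¹`, and commutators of elements of `1 + Δ` lie in
`Δ²`. Modulo `Dsoc` central elements with the same `p`-th power agree, because their quotient lies
in `Soc(G)`. A central `y` has coefficients that are constant on conjugacy classes, and every
non-central class has size divisible by `p`. So modulo `I` only the central part of `y` survives,
and it collapses to `∑_w (∑_{g ∈ Z(G), gᵖ = w} y_g) • g_w` for a choice of `g_w` with `g_wᵖ = w`.
Each inner sum vanishes: its `p`-th power is `∑_{gᵖ = w} y_gᵖ`, where non-central classes are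
again discarded, and this is the coefficient of `w` in `yᵖ = 0`. The last step holds because the
coefficient at a central `w` is a trace, and for a trace `τ` in characteristic `p` one has
`τ((∑ xᵢ)ᵖ) = ∑ τ(xᵢᵖ)`: rotating a word of length `p` does not change `τ` of its product, and
only the constant words are fixed by every rotation.

For the other inclusion: `s - 1` is central with `(s - 1)ᵖ = sᵖ - 1 = 0` for `s ∈ Soc(G)`, and
`Ω₁(Z(FG)) + Δ²` is already an ideal, since `r y ≡ ε(r) y` modulo `Δ²` whenever `y ∈ Δ`.
-/

open MulAction Finset MonoidAlgebra

theorem charP_of_algHom {F A : Type*} [CommSemiring F] [Semiring A] [Algebra F A] (p : ℕ)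
    [CharP F p] (ε : A →ₐ[F] F) : CharP A p :=
  charP_of_injective_algebraMap (R := F) (fun a b h => by simpa using congrArg ε h) p

theorem Ideal.mul_mem_pow_two {R : Type*} [Semiring R] {I : Ideal R} {a b : R} (ha : a ∈ I)
    (hb : b ∈ I) : a * b ∈ I ^ 2 := by
  rw [Submodule.pow_succ, Submodule.pow_one]
  exact mul_mem_mul ha hb

theorem Ideal.mul_sub_mul_mem_pow_two {R : Type*} [Ring R] {I : Ideal R} {a b : R}
    (ha : a - 1 ∈ I) (hb : b - 1 ∈ I) : a * b - b * a ∈ I ^ 2 := by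
  have h : a * b - b * a = (a - 1) * (b - 1) - (b - 1) * (a - 1) := by noncomm_ring
  rw [h]
  exact sub_mem (mul_mem_pow_two ha hb) (mul_mem_pow_two hb ha)

theorem Ideal.span_sup_ker_pow_two_subset {F A : Type*} [CommRing F] [IsReduced F] [Ring A]
    [Algebra F A] (p : ℕ) [Fact p.Prime] [CharP F p] (ε : A →ₐ[F] F) {s : Set A}
    (hs : ∀ a ∈ s, a ∈ Subalgebra.center F A ∧ a ^ p = 0) :
    ((Ideal.span s ⊔ RingHom.ker ε ^ 2 : Ideal A) : Set A) ⊆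
      {x | ∃ y ∈ Subalgebra.center F A, y ^ p = 0 ∧ ∃ z ∈ RingHom.ker ε ^ 2, x = y + z} := by
  have : CharP A p := charP_of_algHom p ε
  intro x hx
  obtain ⟨d, hd, q, hq, rfl⟩ := Submodule.mem_sup.1 hx
  clear hx
  suffices ∃ y ∈ Subalgebra.center F A, y ^ p = 0 ∧ ∃ z ∈ RingHom.ker ε ^ 2, d = y + z by
    obtain ⟨y, hy, hyp, z, hz, rfl⟩ := this
    exact ⟨y, hy, hyp, z + q, add_mem hz hq, add_assoc _ _ _⟩
  induction hd using Submodule.span_induction with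
  | mem a ha => exact ⟨a, (hs a ha).1, (hs a ha).2, 0, zero_mem _, (add_zero a).symm⟩
  | zero =>
    exact ⟨0, zero_mem _, zero_pow (Fact.out : p.Prime).ne_zero, 0, zero_mem _, (add_zero 0).symm⟩
  | add a b _ _ ha hb =>
    obtain ⟨y₁, hy₁, hy₁p, z₁, hz₁, rfl⟩ := ha
    obtain ⟨y₂, hy₂, hy₂p, z₂, hz₂, rfl⟩ := hb
    refine ⟨y₁ + y₂, add_mem hy₁ hy₂, ?_, z₁ + z₂, add_mem hz₁ hz₂, add_add_add_comm _ _ _ _⟩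
    rw [add_pow_char_of_commute _ (Subalgebra.mem_center_iff.1 hy₂ y₁), hy₁p, hy₂p, add_zero]
  | smul r a _ ha =>
    obtain ⟨y, hy, hyp, z, hz, rfl⟩ := ha
    have hyε : y ∈ RingHom.ker ε := IsReduced.eq_zero _ ⟨p, by rw [← map_pow, hyp, map_zero]⟩
    have hrε : r - algebraMap F A (ε r) ∈ RingHom.ker ε := by simp [RingHom.mem_ker]
    refine ⟨ε r • y, Subalgebra.smul_mem _ hy _, by rw [smul_pow, hyp, smul_zero],
      (r - algebraMap F A (ε r)) * y + r * z,
      add_mem (Ideal.mul_mem_pow_two hrε hyε) (Ideal.mul_mem_left _ r hz), ?_⟩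
    rw [smul_eq_mul, Algebra.smul_def]
    noncomm_ring

theorem Subgroup.mem_closure_center_pow_eq_one_iff {G : Type*} [Group G] {p : ℕ} {s : G} :
    s ∈ closure {g : G | g ∈ center G ∧ g ^ p = 1} ↔ s ∈ center G ∧ s ^ p = 1 := by
  refine ⟨fun hs => ?_, fun hs => subset_closure hs⟩
  induction hs using closure_induction with
  | mem x hx => exact hx
  | one => exact ⟨one_mem _, one_pow p⟩
  | mul x y _ _ hx hy =>
    refine ⟨mul_mem hx.1 hy.1, ?_⟩
    rw [Commute.mul_pow (mem_center_iff.1 hy.1 x), hx.2, hy.2, one_mul]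
  | inv x _ hx => exact ⟨inv_mem hx.1, by rw [inv_pow, hx.2, inv_one]⟩

theorem IsPGroup.sum_filter_mem_fixedPoints {p : ℕ} [Fact p.Prime] {H X M : Type*} [Group H]
    [MulAction H X] [Fintype X] [AddCommMonoid M] (hH : IsPGroup p H) (hM : ∀ m : M, p • m = 0)
    (v : X → M) (hv : ∀ (h : H) (x : X), v (h • x) = v x)
    [DecidablePred (· ∈ fixedPoints H X)] :
    ∑ x with x ∈ fixedPoints H X, v x = ∑ x, v x := by
  classical
  let π : X → orbitRel.Quotient H X := Quotient.mk _
  rw [← sum_fiberwise _ π, ← sum_fiberwise _ π]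
  refine sum_congr rfl fun ω _ => ?_
  induction ω using Quotient.inductionOn with | h x₀ => ?_
  have hfiber : ∀ x, π x = ⟦x₀⟧ ↔ x ∈ orbit H x₀ := fun x => Quotient.eq.trans orbitRel_apply
  by_cases hx₀ : x₀ ∈ fixedPoints H X
  · rw [filter_filter]
    refine sum_congr (filter_congr fun x _ => ⟨And.right, fun hx => ⟨?_, hx⟩⟩) fun _ _ => rfl
    obtain ⟨h, rfl⟩ := mem_orbit_iff.1 ((hfiber x).1 hx)
    exact (hx₀ h).symm ▸ hx₀
  have hcard : #{x | π x = ⟦x₀⟧} = Nat.card (orbit H x₀) := by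
    rw [Nat.card_eq_card_toFinset]
    congr 1
    ext x
    simp [hfiber]
  obtain ⟨n, hn⟩ := hH.card_orbit x₀
  have hn0 : n ≠ 0 := by
    rintro rfl
    refine hx₀ (mem_fixedPoints_iff_card_orbit_eq_one.2 ?_)
    rw [← Nat.card_eq_fintype_card, hn, pow_zero]
  rw [sum_eq_zero, sum_congr rfl (g := fun _ => v x₀), sum_const, hcard, hn,
    ← Nat.succ_pred_eq_of_ne_zero hn0, pow_succ, mul_nsmul, hM]
  · intro x hx
    obtain ⟨h, rfl⟩ := mem_orbit_iff.1 ((hfiber x).1 (mem_filter.1 hx).2)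
    exact hv h x₀
  · intro x hx
    simp only [mem_filter, mem_univ, true_and] at hx
    obtain ⟨h, rfl⟩ := mem_orbit_iff.1 (mem_orbit_symm.1 ((hfiber x).1 hx.2))
    exact absurd ((hx.1 h).symm ▸ hx.1) hx₀

theorem sum_pow_eq_sum_list_prod_ofFn {ι A : Type*} [Semiring A] [Fintype ι] (x : ι → A)
    (n : ℕ) : (∑ i, x i) ^ n = ∑ f : Fin n → ι, (List.ofFn (x ∘ f)).prod := by
  induction n with
  | zero => simp
  | succ n ih =>
    rw [pow_succ', ih, sum_mul_sum, ← Fintype.sum_prod_type',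
      ← (Fin.consEquiv fun _ => ι).sum_comp]
    simp [List.ofFn_succ, Fin.consEquiv, Function.comp_def]

theorem List.ofFn_comp_add_right {α : Type*} {n : ℕ} (f : Fin n → α) (c : Fin n) :
    List.ofFn (fun i => f (i + c)) = (List.ofFn f).rotate c := by
  apply List.ext_get (by simp)
  intro m h₁ h₂
  simp [Fin.add_def]

theorem map_list_prod_rotate {A M : Type*} [Semiring A] [AddCommMonoid M] (τ : A →+ M)
    (hτ : ∀ a b, τ (a * b) = τ (b * a)) (l : List A) (n : ℕ) :
    τ (l.rotate n).prod = τ l.prod := by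
  rw [List.rotate_eq_drop_append_take_mod, List.prod_append, hτ, ← List.prod_append,
    List.take_append_drop]

theorem map_sum_pow_prime_of_map_mul_comm {A M ι : Type*} [Semiring A] [AddCommMonoid M]
    [Fintype ι] (p : ℕ) [Fact p.Prime] (hM : ∀ m : M, p • m = 0) (τ : A →+ M)
    (hτ : ∀ a b, τ (a * b) = τ (b * a)) (x : ι → A) :
    τ ((∑ i, x i) ^ p) = ∑ i, τ (x i ^ p) := by
  classical
  have : NeZero p := ⟨(Fact.out : p.Prime).ne_zero⟩
  let : MulAction (Multiplicative (Fin p)) (Fin p → ι) := arrowAction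
  have hH : IsPGroup p (Multiplicative (Fin p)) := IsPGroup.of_card (n := 1) (by simp)
  have hfixed : univ.filter (· ∈ fixedPoints (Multiplicative (Fin p)) (Fin p → ι)) =
      univ.map ⟨Function.const (Fin p), Function.const_injective⟩ := by
    ext f
    simp only [mem_filter, mem_univ, true_and, mem_map, Function.Embedding.coeFn_mk]
    refine ⟨fun hf => ⟨f 0, funext fun i => ?_⟩, ?_⟩
    · have := congrFun (hf (Multiplicative.ofAdd (-i))) 0
      change f (_ + 0) = f 0 at this
      simpa using this.symm
    · rintro ⟨i, rfl⟩ k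
      rfl
  rw [sum_pow_eq_sum_list_prod_ofFn, map_sum, ← hH.sum_filter_mem_fixedPoints hM, hfixed,
    sum_map]
  · refine sum_congr rfl fun i _ => congrArg τ ?_
    change (List.ofFn fun _ => x i).prod = x i ^ p
    rw [List.ofFn_const, List.prod_replicate]
  · intro k f
    have : x ∘ (k • f) = fun i => (x ∘ f) (i + k⁻¹.toAdd) :=
      funext fun i => congrArg x (congrArg f (add_comm _ _))
    rw [this, List.ofFn_comp_add_right, map_list_prod_rotate τ hτ]

namespace MonoidAlgebra

variable {F G : Type*}

theorem univ_sum_single_coeff [Semiring F] [Fintype G] (y : MonoidAlgebra F G) :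
    ∑ g, single g (y.coeff g) = y :=
  (Finsupp.sum_fintype _ _ fun g => single_zero g).symm.trans y.sum_coeff_single

theorem sum_coeff_smul_of [Semiring F] [Monoid G] [Fintype G] (y : MonoidAlgebra F G) :
    ∑ g, y.coeff g • of F G g = y := by
  simpa [smul_single'] using univ_sum_single_coeff y

theorem of_mem_center [CommSemiring F] [Group G] {s : G} (hs : s ∈ Subgroup.center G) :
    of F G s ∈ Subalgebra.center F (MonoidAlgebra F G) := by
  refine Subalgebra.mem_center_iff.2 fun b => ?_
  ext h
  simp [Subgroup.mem_center_iff.1 (inv_mem hs) h]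

theorem coeff_conj_of_mem_center [CommSemiring F] [Group G] {y : MonoidAlgebra F G}
    (hy : y ∈ Subalgebra.center F (MonoidAlgebra F G)) (c g : G) :
    y.coeff (c * g * c⁻¹) = y.coeff g := by
  have h := congrArg (fun v => v.coeff (c * g)) (Subalgebra.mem_center_iff.1 hy (single c 1))
  simpa using h.symm

theorem coeff_mul_comm_of_mem_center [CommSemiring F] [Group G] {w : G}
    (hw : w ∈ Subgroup.center G) (a b : MonoidAlgebra F G) :
    (a * b).coeff w = (b * a).coeff w := by
  rw [coeff_mul_apply_left, coeff_mul_apply_right]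
  refine Finsupp.sum_congr fun g _ => ?_
  rw [mul_comm, Subgroup.mem_center_iff.1 hw g⁻¹]

theorem coeff_pow_prime_of_mem_center [CommSemiring F] (p : ℕ) [Fact p.Prime] [CharP F p]
    [Group G] [Fintype G] [DecidableEq G] {w : G} (hw : w ∈ Subgroup.center G)
    (y : MonoidAlgebra F G) :
    (y ^ p).coeff w = ∑ g with g ^ p = w, y.coeff g ^ p := by
  let τ : MonoidAlgebra F G →+ F := (Finsupp.applyAddHom w).comp coeffAddEquiv.toAddMonoidHom
  have hpow := map_sum_pow_prime_of_map_mul_comm p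
    (fun m => by rw [nsmul_eq_mul, CharP.cast_eq_zero, zero_mul])
    τ (coeff_mul_comm_of_mem_center hw) fun g => single g (y.coeff g)
  rw [univ_sum_single_coeff] at hpow
  simpa [τ, single_pow, sum_filter, Finsupp.single_apply] using hpow

theorem sum_coeff_center_eq_zero_of_pow_eq_zero [CommRing F] [IsReduced F] (p : ℕ)
    [Fact p.Prime] [CharP F p] [Group G] [Fintype G] [DecidableEq G]
    [DecidablePred (· ∈ Subgroup.center G)] (hG : IsPGroup p G) {y : MonoidAlgebra F G}
    (hy : y ∈ Subalgebra.center F (MonoidAlgebra F G)) (hyp : y ^ p = 0) {w : G}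
    (hw : w ∈ Subgroup.center G) :
    ∑ g with g ∈ Subgroup.center G ∧ g ^ p = w, y.coeff g = 0 := by
  classical
  refine IsReduced.eq_zero _ ⟨p, ?_⟩
  have hconj : ∀ c g : G, (c * g * c⁻¹) ^ p = w ↔ g ^ p = w := fun c g => by
    rw [conj_pow, mul_inv_eq_iff_eq_mul, ← Subgroup.mem_center_iff.1 hw, mul_right_inj]
  have hfix := (hG.of_equiv ConjAct.toConjAct).sum_filter_mem_fixedPoints
    (fun m : F => by rw [nsmul_eq_mul, CharP.cast_eq_zero, zero_mul])
    (fun g => if g ^ p = w then y.coeff g ^ p else 0) fun c g => by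
      simp only [ConjAct.smul_def, hconj, coeff_conj_of_mem_center hy]
  simp only [ConjAct.fixedPoints_eq_center, SetLike.mem_coe] at hfix
  rw [sum_pow_char, ← filter_filter, sum_filter, hfix, ← sum_filter,
    ← coeff_pow_prime_of_mem_center p hw, hyp]
  rfl

theorem of_sub_one_mem_ker_lift [CommRing F] [Monoid G] (g : G) :
    of F G g - 1 ∈ RingHom.ker (lift F F G 1) := by
  simp

theorem of_sub_one_pow_eq_zero [CommRing F] (p : ℕ) [Fact p.Prime] [CharP F p] [Monoid G]
    {s : G} (hs : s ^ p = 1) : (of F G s - 1) ^ p = 0 := by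
  have : CharP (MonoidAlgebra F G) p := charP_of_algHom p (lift F F G 1)
  rw [sub_pow_char_of_commute _ (Commute.one_right _), ← map_pow, hs, map_one, one_pow, sub_self]

theorem of_conj_sub_of_mem_ker_lift_pow_two [CommRing F] [Group G] (c g : G) :
    of F G (c * g * c⁻¹) - of F G g ∈ RingHom.ker (lift F F G 1) ^ 2 := by
  have h : of F G (c * g * c⁻¹) - of F G g =
      of F G c * of F G (g * c⁻¹) - of F G (g * c⁻¹) * of F G c := by
    simp only [← map_mul, mul_assoc, inv_mul_cancel, mul_one]
  rw [h]
  exact Ideal.mul_sub_mul_mem_pow_two (of_sub_one_mem_ker_lift c) (of_sub_one_mem_ker_lift _)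

theorem of_sub_of_mem_span_of_sub_one [CommRing F] [Group G] {N : Subgroup G} {g g' : G}
    (h : g'⁻¹ * g ∈ N) : of F G g - of F G g' ∈ Ideal.span {a | ∃ s ∈ N, a = of F G s - 1} := by
  have e : of F G g - of F G g' = of F G g' * (of F G (g'⁻¹ * g) - 1) := by
    rw [mul_sub, ← map_mul, mul_inv_cancel_left, mul_one]
  rw [e]
  exact Ideal.mul_mem_left _ _ (Ideal.subset_span ⟨_, h, rfl⟩)

theorem map_eq_zero_of_pow_eq_zero [CommRing F] [IsReduced F] (p : ℕ) [Fact p.Prime]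
    [CharP F p] [Group G] [Fintype G] (hG : IsPGroup p G) {Q : Type*} [AddCommGroup Q]
    [Module F Q] (π : MonoidAlgebra F G →ₗ[F] Q)
    (hπconj : ∀ c g : G, π (of F G (c * g * c⁻¹)) = π (of F G g))
    (hπpow : ∀ g g' : G, g ∈ Subgroup.center G → g' ∈ Subgroup.center G → g ^ p = g' ^ p →
      π (of F G g) = π (of F G g'))
    {y : MonoidAlgebra F G} (hy : y ∈ Subalgebra.center F (MonoidAlgebra F G)) (hyp : y ^ p = 0) :
    π y = 0 := by
  classical
  have hQ : ∀ q : Q, p • q = 0 := fun q => by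
    rw [← Nat.cast_smul_eq_nsmul F, CharP.cast_eq_zero, zero_smul]
  calc π y = ∑ g, y.coeff g • π (of F G g) := by
        conv_lhs => rw [← sum_coeff_smul_of y]
        simp only [map_sum, map_smul]
    _ = ∑ g with g ∈ Subgroup.center G, y.coeff g • π (of F G g) := by
        have hfix := (hG.of_equiv ConjAct.toConjAct).sum_filter_mem_fixedPoints hQ
          (fun g => y.coeff g • π (of F G g)) fun c g => by
            simp only [ConjAct.smul_def, hπconj, coeff_conj_of_mem_center hy]
        simp only [ConjAct.fixedPoints_eq_center, SetLike.mem_coe] at hfix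
        exact hfix.symm
    _ = ∑ w, ∑ g ∈ {g | g ∈ Subgroup.center G} with g ^ p = w, y.coeff g • π (of F G g) :=
        (sum_fiberwise _ _ _).symm
    _ = 0 := sum_eq_zero fun w _ => by
        rcases eq_empty_or_nonempty {g ∈ {g | g ∈ Subgroup.center G} | g ^ p = w} with h | ⟨g₀, hg₀⟩
        · rw [h, sum_empty]
        simp only [mem_filter, mem_univ, true_and] at hg₀
        have hw : w ∈ Subgroup.center G := hg₀.2 ▸ pow_mem hg₀.1 p
        have hconst : ∀ g ∈ ({g ∈ {g | g ∈ Subgroup.center G} | g ^ p = w} : Finset G),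
            y.coeff g • π (of F G g) = y.coeff g • π (of F G g₀) := fun g hg => by
          simp only [mem_filter, mem_univ, true_and] at hg
          rw [hπpow g g₀ hg.1 hg₀.1 (hg.2.trans hg₀.2.symm)]
        rw [sum_congr rfl hconst, ← sum_smul, filter_filter,
          sum_coeff_center_eq_zero_of_pow_eq_zero p hG hy hyp hw, zero_smul]

theorem mem_span_of_sub_one_sup_ker_pow_two [CommRing F] [IsReduced F] (p : ℕ) [Fact p.Prime]
    [CharP F p] [Group G] [Finite G] (hG : IsPGroup p G) {y : MonoidAlgebra F G}
    (hy : y ∈ Subalgebra.center F (MonoidAlgebra F G)) (hyp : y ^ p = 0) :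
    y ∈ Ideal.span {a | ∃ s ∈ Subgroup.closure {g : G | g ∈ Subgroup.center G ∧ g ^ p = 1},
      a = of F G s - 1} ⊔ RingHom.ker (lift F F G 1) ^ 2 := by
  have := Fintype.ofFinite G
  rw [← Submodule.restrictScalars_mem F, ← Submodule.Quotient.mk_eq_zero, ← Submodule.mkQ_apply]
  refine map_eq_zero_of_pow_eq_zero p hG _ (fun c g => ?_) (fun g g' hg hg' hgp => ?_) hy hyp
  · exact (Submodule.Quotient.eq _).2
      (Ideal.mem_sup_right (of_conj_sub_of_mem_ker_lift_pow_two c g))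
  · refine (Submodule.Quotient.eq _).2 (Ideal.mem_sup_left (of_sub_of_mem_span_of_sub_one ?_))
    refine Subgroup.mem_closure_center_pow_eq_one_iff.2 ⟨mul_mem (inv_mem hg') hg, ?_⟩
    rw [Commute.mul_pow (Subgroup.mem_center_iff.1 hg _), inv_pow, hgp, inv_mul_cancel]

end MonoidAlgebra

theorem socle_aug_ideal_plus_aug_sq
    (p : ℕ) [Fact p.Prime] (F : Type*) [Field F] [CharP F p]
    (G : Type*) [Group G] [Finite G] (hG : IsPGroup p G) :
    let Δ : Ideal (MonoidAlgebra F G) :=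
      RingHom.ker ((MonoidAlgebra.lift F F G) 1).toRingHom
    let Soc : Subgroup G :=
      Subgroup.closure {g : G | g ∈ Subgroup.center G ∧ g ^ p = 1}
    let Dsoc : Ideal (MonoidAlgebra F G) :=
      Ideal.span {a : MonoidAlgebra F G | ∃ s ∈ Soc, a = MonoidAlgebra.of F G s - 1}
    ((Dsoc ⊔ Δ ^ 2 : Ideal (MonoidAlgebra F G)) : Set (MonoidAlgebra F G)) =
      {x : MonoidAlgebra F G | ∃ y ∈ Subalgebra.center F (MonoidAlgebra F G),
        y ^ p = 0 ∧ ∃ z ∈ (Δ ^ 2 : Ideal (MonoidAlgebra F G)), x = y + z} := by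
  intro Δ Soc Dsoc
  refine subset_antisymm (Ideal.span_sup_ker_pow_two_subset p (lift F F G 1) ?_) ?_
  · rintro _ ⟨s, hs, rfl⟩
    obtain ⟨hsc, hsp⟩ := Subgroup.mem_closure_center_pow_eq_one_iff.1 hs
    exact ⟨sub_mem (of_mem_center hsc) (one_mem _), of_sub_one_pow_eq_zero p hsp⟩
  · rintro _ ⟨y, hy, hyp, z, hz, rfl⟩
    exact add_mem (mem_span_of_sub_one_sup_ker_pow_two p hG hy hyp) (Ideal.mem_sup_right hz)
end

section
/- Every finite p-group G admits a decomposition G = T × U into an internal direct product where T is elementary abelian, T ∩ Frat(G) = 1, |T| = |Soc(G) : Soc(G) ∩ Frat(G)|, Soc(G)·U = G, and |U| = |G| / |Soc(G) : Soc(G) ∩ Frat(G)|. Moreover, for any such decomposition, Soc(G) = T × Soc(U) and Frat(G) = Frat(U). -/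
open Subgroup
open scoped Pointwise

/-- The socle of a `p`-group: the subgroup generated by central elements of order dividing `p`. -/
def socle (p : ℕ) (G : Type*) [Group G] : Subgroup G :=
  Subgroup.closure {g : G | g ∈ Subgroup.center G ∧ g ^ p = 1}

/-- An elementary decomposition of a finite `p`-group `G`: `G = T × U` internally, with `T`
elementary abelian, `T ∩ Frat(G) = 1`, `|T| = |Soc(G) : Soc(G) ∩ Frat(G)|`, `Soc(G)U = G`
and `|U| = |G| / |Soc(G) : Soc(G) ∩ Frat(G)|`. -/
def IsElementaryDecomposition (p : ℕ) {G : Type*} [Group G] (T U : Subgroup G) : Prop :=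
  T.Normal ∧ U.Normal ∧ T ⊓ U = ⊥ ∧ T ⊔ U = ⊤ ∧
    (∀ x ∈ T, x ^ p = 1) ∧ (∀ x ∈ T, ∀ y ∈ T, x * y = y * x) ∧
    T ⊓ frattini G = ⊥ ∧
    Nat.card T = Nat.card ↥(socle p G) / Nat.card ↥(socle p G ⊓ frattini G) ∧
    socle p G ⊔ U = ⊤ ∧
    Nat.card U =
      Nat.card G / (Nat.card ↥(socle p G) / Nat.card ↥(socle p G ⊓ frattini G))

section Helpers

variable {p : ℕ} {G : Type*} [Group G]

/-- The set of central elements of order dividing `p` is a subgroup. -/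
def Omega1 (p : ℕ) (G : Type*) [Group G] : Subgroup G where
  carrier := {g : G | g ∈ Subgroup.center G ∧ g ^ p = 1}
  one_mem' := ⟨Subgroup.one_mem _, one_pow p⟩
  mul_mem' := by
    rintro a b ⟨ha, ha1⟩ ⟨hb, hb1⟩
    have hc : Commute a b := ((Subgroup.mem_center_iff.mp ha b)).symm
    exact ⟨mul_mem ha hb, by rw [hc.mul_pow, ha1, hb1, one_mul]⟩
  inv_mem' := by
    rintro a ⟨ha, ha1⟩
    exact ⟨inv_mem ha, by rw [inv_pow, ha1, inv_one]⟩

lemma socle_eq_Omega1 : socle p G = Omega1 p G :=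
  le_antisymm (Subgroup.closure_le _ |>.mpr fun _ h => h) (fun _ hx => Subgroup.subset_closure hx)

lemma mem_socle_iff {x : G} : x ∈ socle p G ↔ x ∈ Subgroup.center G ∧ x ^ p = 1 := by
  rw [socle_eq_Omega1]; rfl

lemma normal_of_le_center {T : Subgroup G} (h : T ≤ Subgroup.center G) : T.Normal := by
  constructor
  intro n hn g
  have := Subgroup.mem_center_iff.mp (h hn) g
  rw [this, mul_assoc, mul_inv_cancel, mul_one]
  exact hn

/-- Complement lemma in elementary abelian groups. -/
lemma exists_compl_of_expP [Fact p.Prime] {A : Type*} [CommGroup A]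
    (hA : ∀ x : A, x ^ p = 1) (B : Subgroup A) :
    ∃ C : Subgroup A, B ⊓ C = ⊥ ∧ B ⊔ C = ⊤ := by
  letI : Module (ZMod p) (Additive A) := AddCommGroup.zmodModule (n := p) (fun x => hA x.toMul)
  let e : Subgroup A ≃o Submodule (ZMod p) (Additive A) :=
    (Subgroup.toAddSubgroup).trans (AddSubgroup.toZModSubmodule p)
  obtain ⟨q, hq⟩ := Submodule.exists_isCompl (e B)
  refine ⟨e.symm q, ?_, ?_⟩
  · have := hq.disjoint.map_orderIso e.symm
    rw [disjoint_iff] at this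
    simpa using this
  · have := hq.codisjoint.map_orderIso e.symm
    rw [codisjoint_iff] at this
    simpa using this

lemma mem_frattini_iff {x : G} :
    x ∈ frattini G ↔ ∀ M : Subgroup G, IsCoatom M → x ∈ M := by
  simp [frattini, Order.radical, Subgroup.mem_iInf]

end Helpers

section PGroup
variable {p : ℕ} [Fact p.Prime] {G : Type*} [Group G] [Finite G]

lemma coatom_normal (hG : IsPGroup p G) {M : Subgroup G} (hM : IsCoatom M) : M.Normal :=
  haveI := hG.isNilpotent
  Subgroup.NormalizerCondition.normal_of_coatom M normalizerCondition_of_isNilpotent hM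

omit [Finite G] in
/-- In the quotient by a coatom, every subgroup is `⊥` or `⊤`. -/
lemma quot_coatom_subgroups {M : Subgroup G} (hM : IsCoatom M) [M.Normal]
    (H : Subgroup (G ⧸ M)) : H = ⊥ ∨ H = ⊤ := by
  set K := H.comap (QuotientGroup.mk' M) with hK
  have hMK : M ≤ K := fun m hm => by
    simp only [hK, Subgroup.mem_comap]
    have : QuotientGroup.mk' M m = 1 := (QuotientGroup.eq_one_iff m).mpr hm
    rw [this]; exact H.one_mem
  have hsurj : Function.Surjective (QuotientGroup.mk' M) := QuotientGroup.mk'_surjective M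
  rcases eq_or_lt_of_le hMK with h | h
  · left
    have : H = K.map (QuotientGroup.mk' M) := (Subgroup.map_comap_eq_self_of_surjective hsurj H).symm
    rw [this, ← h]
    refine le_bot_iff.mp ?_
    intro x hx
    obtain ⟨m, hm, rfl⟩ := hx
    simpa using (QuotientGroup.eq_one_iff m).mpr hm
  · right
    have hKtop : K = ⊤ := hM.2 K h
    rw [← Subgroup.map_comap_eq_self_of_surjective hsurj H, ← hK, hKtop]
    exact Subgroup.map_top_of_surjective _ hsurj

/-- In a `p`-group where every subgroup is `⊥` or `⊤`, every element satisfies `x ^ p = 1`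
and any two elements commute. -/
lemma elem_ab_of_no_proper {Q : Type*} [Group Q] [Finite Q] (hQ : IsPGroup p Q)
    (h : ∀ H : Subgroup Q, H = ⊥ ∨ H = ⊤) :
    (∀ g : Q, g ^ p = 1) ∧ (∀ a b : Q, a * b = b * a) := by
  have hp := (Fact.out : p.Prime)
  have key : ∀ g : Q, g ^ p = 1 := by
    intro g
    rcases h (Subgroup.zpowers (g ^ p)) with hb | ht
    · exact Subgroup.zpowers_eq_bot.mp hb
    · by_contra hne
      have hg1 : g ≠ 1 := fun e => hne (by rw [e, one_pow])
      have hmem : g ∈ Subgroup.zpowers (g ^ p) := by rw [ht]; trivial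
      obtain ⟨m, hm⟩ := hmem
      have hm' : (g ^ p) ^ m = g := hm
      have hzp : g ^ ((p : ℤ) * m - 1) = 1 := by
        rw [sub_eq_add_neg, zpow_add, zpow_neg, zpow_one, zpow_mul, zpow_natCast, hm',
          mul_inv_cancel]
      have hdvd : (orderOf g : ℤ) ∣ (p : ℤ) * m - 1 := orderOf_dvd_iff_zpow_eq_one.mpr hzp
      obtain ⟨k, hk⟩ := (IsPGroup.iff_orderOf.mp hQ) g
      have hk0 : k ≠ 0 := by
        intro e; rw [e, pow_zero] at hk; exact hg1 (orderOf_eq_one_iff.mp hk)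
      have hpdvd : (p : ℤ) ∣ (orderOf g : ℤ) := by
        rw [hk]; exact_mod_cast dvd_pow_self p hk0
      have : (p : ℤ) ∣ 1 := by
        have h1 : (p : ℤ) ∣ (p : ℤ) * m - 1 := hpdvd.trans hdvd
        have h2 : (p : ℤ) ∣ (p : ℤ) * m := Dvd.intro m rfl
        have := dvd_sub h2 h1
        simpa using this
      have : (p : ℤ) ≤ 1 := Int.le_of_dvd one_pos this
      exact absurd this (by exact_mod_cast hp.one_lt.not_ge)
  refine ⟨key, ?_⟩
  intro a b
  rcases subsingleton_or_nontrivial Q with hs | hn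
  · exact Subsingleton.elim _ _
  · obtain ⟨g, hg⟩ := exists_ne (1 : Q)
    have : Subgroup.zpowers g = ⊤ := by
      rcases h (Subgroup.zpowers g) with hb | ht
      · exact absurd (Subgroup.zpowers_eq_bot.mp hb) hg
      · exact ht
    have : IsCyclic Q := ⟨⟨g, fun x => by
      show x ∈ Subgroup.zpowers g
      rw [this]; trivial⟩⟩
    letI := this.commGroup
    exact mul_comm a b

lemma pow_mem_frattini (hG : IsPGroup p G) (x : G) : x ^ p ∈ frattini G := by
  rw [mem_frattini_iff]
  intro M hM
  haveI := coatom_normal hG hM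
  obtain ⟨hpow, _⟩ := elem_ab_of_no_proper (hG.to_quotient M) (quot_coatom_subgroups hM)
  have : ((x : G ⧸ M)) ^ p = 1 := hpow _
  rwa [← QuotientGroup.mk_pow, QuotientGroup.eq_one_iff] at this

lemma commutator_mem_frattini (hG : IsPGroup p G) (x y : G) :
    x * y * x⁻¹ * y⁻¹ ∈ frattini G := by
  rw [mem_frattini_iff]
  intro M hM
  haveI := coatom_normal hG hM
  obtain ⟨_, hcomm⟩ := elem_ab_of_no_proper (hG.to_quotient M) (quot_coatom_subgroups hM)
  rw [← QuotientGroup.eq_one_iff]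
  have : ((x * y * x⁻¹ * y⁻¹ : G) : G ⧸ M)
      = (x : G ⧸ M) * y * (x : G ⧸ M)⁻¹ * (y : G ⧸ M)⁻¹ := by rfl
  rw [this, hcomm (x : G ⧸ M) y]
  group

lemma index_coatom_eq (hG : IsPGroup p G) {M : Subgroup G} (hM : IsCoatom M) : M.index = p := by
  haveI := coatom_normal hG hM
  obtain ⟨hpow, _⟩ := elem_ab_of_no_proper (hG.to_quotient M) (quot_coatom_subgroups hM)
  have hne1 : M.index ≠ 1 := fun h => hM.1 (Subgroup.index_eq_one.mp h)
  have hcard : M.index = Nat.card (G ⧸ M) := rfl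
  have hnt : Nontrivial (G ⧸ M) := by
    have h0 : 0 < Nat.card (G ⧸ M) := Nat.card_pos
    have h1 : 1 < Nat.card (G ⧸ M) := by omega
    exact Finite.one_lt_card_iff_nontrivial.mp h1
  obtain ⟨g, hg⟩ := exists_ne (1 : G ⧸ M)
  have hord : orderOf g = p := orderOf_eq_prime (hpow g) hg
  have htop : Subgroup.zpowers g = ⊤ := by
    rcases quot_coatom_subgroups hM (Subgroup.zpowers g) with hb | ht
    · exact absurd (Subgroup.zpowers_eq_bot.mp hb) hg
    · exact ht
  rw [hcard, ← Subgroup.card_top (G := G ⧸ M), ← htop, Nat.card_zpowers, hord]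

omit [Finite G] in
lemma isCoatom_of_index_prime {H : Subgroup G} (h : H.index = p) : IsCoatom H := by
  have hp : p.Prime := Fact.out
  constructor
  · intro e; rw [e, Subgroup.index_top] at h; exact hp.ne_one h.symm
  · intro K hK
    have h1 : H.relIndex K * K.index = H.index := Subgroup.relIndex_mul_index hK.le
    rw [h] at h1
    have hdvd : K.index ∣ p := Dvd.intro_left _ h1
    rcases (Nat.Prime.eq_one_or_self_of_dvd hp _ hdvd) with h2 | h2
    · exact Subgroup.index_eq_one.mp h2
    · rw [h2] at h1
      have : H.relIndex K = 1 := by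
        have hp0 : p ≠ 0 := hp.ne_zero
        have := h1
        nlinarith [Nat.one_le_iff_ne_zero.mpr hp0]
      exact absurd (Subgroup.relIndex_eq_one.mp this) (not_le_of_gt hK)

lemma frattini_eq_bot_of_elem_ab {A : Type*} [CommGroup A] [Finite A]
    (hA : ∀ x : A, x ^ p = 1) : frattini A = ⊥ := by
  have hp : p.Prime := Fact.out
  rw [eq_bot_iff]
  intro x hx
  rw [Subgroup.mem_bot]
  by_contra hne
  obtain ⟨C, hC1, hC2⟩ := exists_compl_of_expP hA (Subgroup.zpowers x)
  have hcompl : Subgroup.IsComplement' (Subgroup.zpowers x) C := by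
    apply Subgroup.isComplement'_of_disjoint_and_mul_eq_univ (disjoint_iff.mpr hC1)
    rw [← Subgroup.mul_normal, hC2, Subgroup.coe_top]
  have hCind : C.index = p := by
    rw [hcompl.index_eq_card, Nat.card_zpowers, orderOf_eq_prime (hA x) hne]
  have : x ∈ C := mem_frattini_iff.mp hx C (isCoatom_of_index_prime hCind)
  have : x ∈ Subgroup.zpowers x ⊓ C := ⟨Subgroup.mem_zpowers x, this⟩
  rw [hC1, Subgroup.mem_bot] at this
  exact hne this

end PGroup

section Main
variable {p : ℕ} [Fact p.Prime] {G : Type*} [Group G] [Finite G]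

lemma exists_decomp (hG : IsPGroup p G) : ∃ T U : Subgroup G, IsElementaryDecomposition p T U := by
  have hp : p.Prime := Fact.out
  set F := frattini G with hF
  set S := socle p G with hS
  have hScent : S ≤ Subgroup.center G := fun x hx => (mem_socle_iff.mp hx).1
  have hSp : ∀ x ∈ S, x ^ p = 1 := fun x hx => (mem_socle_iff.mp hx).2
  letI : CommGroup ↥S := { (inferInstance : Group ↥S) with
    mul_comm := fun a b =>
      Subtype.ext ((Subgroup.mem_center_iff.mp (hScent a.2) (b : G)).symm) }
  have hSexp : ∀ x : ↥S, x ^ p = 1 := fun x => Subtype.ext (by simpa using hSp x x.2)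
  obtain ⟨C, hC1, hC2⟩ := exists_compl_of_expP hSexp ((S ⊓ F).subgroupOf S)
  set T := C.map S.subtype with hT
  have hTS : T ≤ S := Subgroup.map_subtype_le C
  have hTcent : T ≤ Subgroup.center G := hTS.trans hScent
  have hTnormal : T.Normal := normal_of_le_center hTcent
  have hTinfSF : T ⊓ (S ⊓ F) = ⊥ := by
    rw [eq_bot_iff]
    rintro x ⟨hxT, hxSF⟩
    obtain ⟨c, hc, rfl⟩ := hxT
    have hcB : c ∈ (S ⊓ F).subgroupOf S := by
      rw [Subgroup.mem_subgroupOf]; exact hxSF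
    have hmem : c ∈ (S ⊓ F).subgroupOf S ⊓ C := ⟨hcB, hc⟩
    rw [hC1, Subgroup.mem_bot] at hmem
    rw [hmem]
    simp [Subgroup.mem_bot]
  have hTF : T ⊓ F = ⊥ := by
    rw [eq_bot_iff]
    rintro x ⟨hxT, hxF⟩
    have : x ∈ T ⊓ (S ⊓ F) := ⟨hxT, hTS hxT, hxF⟩
    rw [hTinfSF] at this; exact this
  haveI : ∀ (H : Subgroup ↥S), H.Normal := fun H => Subgroup.normal_of_comm H
  have hcomplS : Subgroup.IsComplement' ((S ⊓ F).subgroupOf S) C := by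
    apply Subgroup.isComplement'_of_disjoint_and_mul_eq_univ (disjoint_iff.mpr hC1)
    rw [← Subgroup.mul_normal, hC2, Subgroup.coe_top]
  have hcardS : Nat.card ((S ⊓ F).subgroupOf S) * Nat.card C = Nat.card ↥S :=
    hcomplS.card_mul
  have hcardTC : Nat.card T = Nat.card C :=
    (Nat.card_congr (Subgroup.equivMapOfInjective C S.subtype S.subtype_injective).toEquiv).symm
  have hcardB : Nat.card ((S ⊓ F).subgroupOf S) = Nat.card ↥(S ⊓ F) :=
    Nat.card_congr (Subgroup.subgroupOfEquivOfLe inf_le_left).toEquiv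
  have hposB : 0 < Nat.card ↥(S ⊓ F) := Nat.card_pos
  have hcardT : Nat.card T = Nat.card ↥S / Nat.card ↥(S ⊓ F) := by
    refine (Nat.div_eq_of_eq_mul_left hposB ?_).symm
    rw [← hcardS, hcardTC, hcardB, mul_comm]
  set π := QuotientGroup.mk' F with hπ
  have hπsurj : Function.Surjective π := QuotientGroup.mk'_surjective F
  have hQexp : ∀ x : G ⧸ F, x ^ p = 1 := by
    intro x
    obtain ⟨g, rfl⟩ := hπsurj x
    rw [← map_pow]
    exact (QuotientGroup.eq_one_iff _).mpr (pow_mem_frattini hG g)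
  letI : CommGroup (G ⧸ F) := { (inferInstance : Group (G ⧸ F)) with
    mul_comm := by
      intro a b
      obtain ⟨x, rfl⟩ := hπsurj a
      obtain ⟨y, rfl⟩ := hπsurj b
      have h1 : π (x * y * x⁻¹ * y⁻¹) = 1 :=
        (QuotientGroup.eq_one_iff _).mpr (commutator_mem_frattini hG x y)
      rw [map_mul, map_mul, map_mul, map_inv, map_inv] at h1
      have h2 : π x * π y * (π x)⁻¹ = π y := by
        have := mul_inv_eq_one.mp h1
        exact this
      exact mul_inv_eq_iff_eq_mul.mp h2 }
  obtain ⟨W, hW1, hW2⟩ := exists_compl_of_expP hQexp (T.map π)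
  set U := W.comap π with hU
  have hFU : F ≤ U := by
    intro f hf
    show π f ∈ W
    have : π f = 1 := (QuotientGroup.eq_one_iff f).mpr hf
    rw [this]; exact W.one_mem
  have hUnormal : U.Normal := by
    constructor
    intro n hn g
    show π (g * n * g⁻¹) ∈ W
    have heq : π (g * n * g⁻¹) = π n := by
      rw [map_mul, map_mul, map_inv, mul_comm (π g) (π n), mul_assoc, mul_inv_cancel, mul_one]
    rw [heq]; exact hn
  have hUmap : U.map π = W := Subgroup.map_comap_eq_self_of_surjective hπsurj W
  have hTUsup : T ⊔ U = ⊤ := by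
    have h1 : (T ⊔ U).map π = ⊤ := by rw [Subgroup.map_sup, hUmap, hW2]
    have h2 := congrArg (Subgroup.comap π) h1
    rw [Subgroup.comap_map_eq, QuotientGroup.ker_mk'] at h2
    have h3 : F ≤ T ⊔ U := hFU.trans le_sup_right
    rw [sup_eq_left.mpr h3] at h2
    rw [h2]
    exact Subgroup.comap_top π
  have hTUinf : T ⊓ U = ⊥ := by
    rw [eq_bot_iff]
    rintro x ⟨hxT, hxU⟩
    have hmem : π x ∈ T.map π ⊓ W := ⟨⟨x, hxT, rfl⟩, hxU⟩
    rw [hW1, Subgroup.mem_bot] at hmem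
    have hxF : x ∈ F := (QuotientGroup.eq_one_iff x).mp hmem
    have : x ∈ T ⊓ F := ⟨hxT, hxF⟩
    rw [hTF] at this; exact this
  have hSU : S ⊔ U = ⊤ := top_unique (hTUsup ▸ sup_le_sup_right hTS U)
  haveI := hUnormal
  have hcomplTU : Subgroup.IsComplement' T U := by
    apply Subgroup.isComplement'_of_disjoint_and_mul_eq_univ (disjoint_iff.mpr hTUinf)
    rw [← Subgroup.mul_normal, hTUsup, Subgroup.coe_top]
  have hcardG : Nat.card T * Nat.card U = Nat.card G := hcomplTU.card_mul
  have hposT : 0 < Nat.card T := Nat.card_pos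
  have hcardU : Nat.card U = Nat.card G / Nat.card T :=
    (Nat.div_eq_of_eq_mul_left hposT (by rw [← hcardG, mul_comm])).symm
  refine ⟨T, U, hTnormal, hUnormal, hTUinf, hTUsup,
    fun x hx => hSp x (hTS hx),
    fun x hx y hy => (Subgroup.mem_center_iff.mp (hTcent hx) y).symm,
    hTF, hcardT, hSU, by rw [hcardU, hcardT]⟩

lemma unique_structure (hG : IsPGroup p G) (T U : Subgroup G)
    (h : IsElementaryDecomposition p T U) :
    socle p G = T ⊔ (socle p ↥U).map U.subtype ∧
      frattini G = (frattini ↥U).map U.subtype := by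
  obtain ⟨hTn, hUn, hInf, hSup, hTp, hTcomm, hTF, _, _, _⟩ := h
  have hp : p.Prime := Fact.out
  haveI := hTn; haveI := hUn
  have hcomm : ∀ t ∈ T, ∀ u ∈ U, Commute t u := fun t ht u hu =>
    Subgroup.commute_of_normal_of_disjoint T U hTn hUn (disjoint_iff.mpr hInf) t u ht hu
  have hdecomp : ∀ g : G, ∃ t ∈ T, ∃ u ∈ U, g = t * u := by
    intro g
    have hg : g ∈ ((T : Set G) * (U : Set G)) := by
      rw [← Subgroup.mul_normal, hSup]
      trivial
    obtain ⟨t, ht, u, hu, hh⟩ := hg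
    exact ⟨t, ht, u, hu, hh.symm⟩
  have hTcent : T ≤ Subgroup.center G := by
    intro t ht
    rw [Subgroup.mem_center_iff]
    intro g
    obtain ⟨a, ha, b, hb, rfl⟩ := hdecomp g
    have h1 : t * b = b * t := hcomm t ht b hb
    have h2 : a * t = t * a := hTcomm a ha t ht
    calc a * b * t = a * (b * t) := by rw [mul_assoc]
    _ = a * (t * b) := by rw [← h1]
    _ = a * t * b := by rw [mul_assoc]
    _ = t * a * b := by rw [h2]
    _ = t * (a * b) := by rw [mul_assoc]
  have hTS : T ≤ socle p G := fun t ht => mem_socle_iff.mpr ⟨hTcent ht, hTp t ht⟩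
  constructor
  · apply le_antisymm
    · intro s hs
      obtain ⟨hscent, hsp⟩ := mem_socle_iff.mp hs
      obtain ⟨t, ht, u, hu, rfl⟩ := hdecomp s
      have hucent : u ∈ Subgroup.center G := by
        have : u = t⁻¹ * (t * u) := by group
        rw [this]
        exact mul_mem (inv_mem (hTcent ht)) hscent
      have hup : u ^ p = 1 := by
        have hc : Commute t u := hcomm t ht u hu
        rw [hc.mul_pow, hTp t ht, one_mul] at hsp
        exact hsp
      have husoc : (⟨u, hu⟩ : ↥U) ∈ socle p ↥U := by
        rw [mem_socle_iff]
        constructor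
        · rw [Subgroup.mem_center_iff]
          intro z
          exact Subtype.ext (Subgroup.mem_center_iff.mp hucent (z : G))
        · exact Subtype.ext (by simpa using hup)
      exact mul_mem (Subgroup.mem_sup_left ht)
        (Subgroup.mem_sup_right ⟨⟨u, hu⟩, husoc, rfl⟩)
    · refine sup_le hTS ?_
      rintro x ⟨⟨u, hu⟩, husoc, rfl⟩
      obtain ⟨hcentU, hpowU⟩ := mem_socle_iff.mp husoc
      rw [mem_socle_iff]
      constructor
      · rw [Subgroup.mem_center_iff]
        intro g
        obtain ⟨a, ha, b, hb, rfl⟩ := hdecomp g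
        have h1 : a * u = u * a := (hcomm a ha u hu).eq
        have h2 : b * u = u * b := by
          have := Subgroup.mem_center_iff.mp hcentU ⟨b, hb⟩
          exact congrArg Subtype.val this
        calc a * b * u = a * (b * u) := by rw [mul_assoc]
        _ = a * (u * b) := by rw [h2]
        _ = a * u * b := by rw [mul_assoc]
        _ = u * a * b := by rw [h1]
        _ = u * (a * b) := by rw [mul_assoc]
      · have := congrArg Subtype.val hpowU
        simpa using this
  · let f : ↥U →* G ⧸ T := (QuotientGroup.mk' T).comp U.subtype
    have hfinj : Function.Injective f := by
      rw [← MonoidHom.ker_eq_bot_iff, eq_bot_iff]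
      rintro ⟨u, hu⟩ hker
      have : (u : G) ∈ T := (QuotientGroup.eq_one_iff u).mp hker
      have : u ∈ T ⊓ U := ⟨this, hu⟩
      rw [hInf, Subgroup.mem_bot] at this
      rw [Subgroup.mem_bot]
      exact Subtype.ext this
    have hfsurj : Function.Surjective f := by
      intro q
      obtain ⟨g, rfl⟩ := QuotientGroup.mk'_surjective T q
      obtain ⟨t, ht, u, hu, rfl⟩ := hdecomp g
      refine ⟨⟨u, hu⟩, ?_⟩
      show QuotientGroup.mk' T u = QuotientGroup.mk' T (t * u)
      rw [map_mul]
      have : QuotientGroup.mk' T t = 1 := (QuotientGroup.eq_one_iff t).mpr ht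
      rw [this, one_mul]
    let e : ↥U ≃* G ⧸ T := MulEquiv.ofBijective f ⟨hfinj, hfsurj⟩
    let ρ : G →* ↥U := (e.symm.toMonoidHom).comp (QuotientGroup.mk' T)
    have hρsurj : Function.Surjective ρ :=
      e.symm.surjective.comp (QuotientGroup.mk'_surjective T)
    have hρu : ∀ u : ↥U, ρ (u : G) = u := by
      intro u
      show e.symm (QuotientGroup.mk' T (u : G)) = u
      have : QuotientGroup.mk' T (u : G) = e u := rfl
      rw [this, e.symm_apply_apply]
    let fT : ↥T →* G ⧸ U := (QuotientGroup.mk' U).comp T.subtype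
    have hfTinj : Function.Injective fT := by
      rw [← MonoidHom.ker_eq_bot_iff, eq_bot_iff]
      rintro ⟨t, ht⟩ hker
      have : (t : G) ∈ U := (QuotientGroup.eq_one_iff t).mp hker
      have : t ∈ T ⊓ U := ⟨ht, this⟩
      rw [hInf, Subgroup.mem_bot] at this
      rw [Subgroup.mem_bot]
      exact Subtype.ext this
    have hfTsurj : Function.Surjective fT := by
      intro q
      obtain ⟨g, rfl⟩ := QuotientGroup.mk'_surjective U q
      obtain ⟨t, ht, u, hu, rfl⟩ := hdecomp g
      refine ⟨⟨t, ht⟩, ?_⟩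
      show QuotientGroup.mk' U t = QuotientGroup.mk' U (t * u)
      rw [map_mul]
      have : QuotientGroup.mk' U u = 1 := (QuotientGroup.eq_one_iff u).mpr hu
      rw [this, mul_one]
    let eT : ↥T ≃* G ⧸ U := MulEquiv.ofBijective fT ⟨hfTinj, hfTsurj⟩
    let σ : G →* ↥T := (eT.symm.toMonoidHom).comp (QuotientGroup.mk' U)
    have hσsurj : Function.Surjective σ :=
      eT.symm.surjective.comp (QuotientGroup.mk'_surjective U)
    letI : CommGroup ↥T := { (inferInstance : Group ↥T) with
      mul_comm := fun a b => Subtype.ext (hTcomm a a.2 b b.2) }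
    have hfratT : frattini ↥T = ⊥ :=
      frattini_eq_bot_of_elem_ab (p := p) (fun x => Subtype.ext (by simpa using hTp x x.2))
    have h1 : frattini G ≤ U := by
      intro x hx
      have hσx : σ x ∈ frattini ↥T := frattini_le_comap_frattini_of_surjective hσsurj hx
      rw [hfratT, Subgroup.mem_bot] at hσx
      have : QuotientGroup.mk' U x = eT (σ x) := (eT.apply_symm_apply _).symm
      rw [hσx, map_one] at this
      exact (QuotientGroup.eq_one_iff x).mp this
    have h2 : frattini G ≤ (frattini ↥U).map U.subtype := by
      intro x hx
      have hxU : x ∈ U := h1 hx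
      have hρx : ρ x ∈ frattini ↥U := frattini_le_comap_frattini_of_surjective hρsurj hx
      have : ρ x = ⟨x, hxU⟩ := hρu ⟨x, hxU⟩
      rw [this] at hρx
      exact ⟨⟨x, hxU⟩, hρx, rfl⟩
    have h3 : (frattini ↥U).map U.subtype ≤ frattini G := by
      rintro x ⟨u, hufrat, rfl⟩
      rw [mem_frattini_iff]
      intro M hM
      by_cases hUM : U ≤ M
      · exact hUM u.2
      · haveI := coatom_normal hG hM
        have hidx : M.index = p := index_coatom_eq hG hM
        have hrel : M.relIndex U ∣ p := hidx ▸ Subgroup.relIndex_dvd_index_of_normal M U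
        have hrel1 : M.relIndex U ≠ 1 := fun hh => hUM (Subgroup.relIndex_eq_one.mp hh)
        have hrelp : M.relIndex U = p := by
          rcases hp.eq_one_or_self_of_dvd _ hrel with hh | hh
          · exact absurd hh hrel1
          · exact hh
        have hco : IsCoatom (M.subgroupOf U) := isCoatom_of_index_prime (p := p) hrelp
        have : u ∈ M.subgroupOf U := mem_frattini_iff.mp hufrat _ hco
        exact Subgroup.mem_subgroupOf.mp this
    exact le_antisymm h2 h3

end Main

theorem elementary_decomposition_exists_and_unique_structure
    (p : ℕ) [Fact p.Prime] (G : Type*) [Group G] [Finite G] (hG : IsPGroup p G) :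
    (∃ T U : Subgroup G, IsElementaryDecomposition p T U) ∧
      ∀ T U : Subgroup G, IsElementaryDecomposition p T U →
        socle p G = T ⊔ (socle p ↥U).map U.subtype ∧
          frattini G = (frattini ↥U).map U.subtype := by
  exact ⟨exists_decomp hG, fun T U h => unique_structure hG T U h⟩
end

section
/- Let G be a finite p-group such that G has nilpotency class 3 and |G : Z(G)| = |Frat(G)| = p^3. Then |G| / |Soc(G) : Soc(G) ∩ Frat(G)| < p^8. -/
open Subgroup

theorem mem_frattini_of_forall_isCoatom {G : Type*} [Group G] {g : G}
    (h : ∀ M : Subgroup G, IsCoatom M → g ∈ M) : g ∈ frattini G := by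
  simpa [frattini, Order.radical, mem_iInf] using h

namespace IsPGroup

variable {p : ℕ} [Fact p.Prime] {G : Type*} [Group G] [Finite G]

theorem index_eq_of_isCoatom (hG : IsPGroup p G) {M : Subgroup G} (hM : IsCoatom M) :
    M.index = p := by
  have hp := (Fact.out : p.Prime)
  obtain ⟨n, hn⟩ := (hG.to_subgroup M).exists_card_eq
  obtain ⟨k, hk⟩ := hG.index M
  have hk0 : k ≠ 0 := by
    rintro rfl
    exact hM.1 (index_eq_one.mp (by simpa using hk))
  have hdvd : p ^ (n + 1) ∣ Nat.card G := by
    rw [← M.card_mul_index, hn, hk, pow_succ]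
    exact mul_dvd_mul_left _ (dvd_pow_self p hk0)
  -- `M` lies in a subgroup of order `p * |M|`, which can only be `G`.
  obtain ⟨K, hK, hMK⟩ := Sylow.exists_subgroup_card_pow_succ hdvd hn
  have hMK' : M ≠ K := by
    rintro rfl
    exact (pow_lt_pow_right₀ hp.one_lt n.lt_succ_self).ne (hn.symm.trans hK)
  have hKtop : K = ⊤ := hM.2 K (lt_of_le_of_ne hMK hMK')
  have hcard := M.card_mul_index
  rw [← card_top (G := G), ← hKtop, hK, hn, pow_succ] at hcard
  exact Nat.eq_of_mul_eq_mul_left (pow_pos hp.pos n) hcard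

theorem normal_of_isCoatom (hG : IsPGroup p G) {M : Subgroup G} (hM : IsCoatom M) : M.Normal :=
  have := hG.isNilpotent
  NormalizerCondition.normal_of_coatom M Group.normalizerCondition_of_isNilpotent hM

theorem pow_mem_frattini (hG : IsPGroup p G) (g : G) : g ^ p ∈ frattini G :=
  mem_frattini_of_forall_isCoatom fun M hM ↦ by
    have := hG.normal_of_isCoatom hM
    simpa [hG.index_eq_of_isCoatom hM] using M.pow_index_mem g

theorem commutator_le_frattini (hG : IsPGroup p G) : commutator G ≤ frattini G := by
  refine le_iInf₂ fun M hM ↦ ?_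
  have := hG.normal_of_isCoatom hM
  have : IsCyclic (G ⧸ M) := isCyclic_of_prime_card (p := p)
    (by rw [← index_eq_card, hG.index_eq_of_isCoatom hM])
  exact Normal.quotient_commutative_iff_commutator_le.mp inferInstance

end IsPGroup

theorem Group.nilpotencyClass_le_two_of_commutator_le_center {G : Type*} [Group G]
    [Group.IsNilpotent G] (h : commutator G ≤ center G) : Group.nilpotencyClass G ≤ 2 := by
  refine Subgroup.upperCentralSeries_eq_top_iff_nilpotencyClass_le.mp (eq_top_iff.mpr fun x _ ↦ ?_)
  refine Subgroup.mem_upperCentralSeries_succ_iff.mpr fun y ↦ ?_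
  rw [Subgroup.upperCentralSeries_one]
  exact h (commutator_mem_commutator (mem_top x) (mem_top y))

theorem Subgroup.card_le_pow_of_lt_of_card_eq_pow_succ {p : ℕ} [Fact p.Prime] {G : Type*} [Group G]
    {H K : Subgroup G} {n : ℕ} (hHK : H < K) (hK : Nat.card K = p ^ (n + 1)) :
    Nat.card H ≤ p ^ n := by
  have hp := (Fact.out : p.Prime)
  have : Finite K := Nat.finite_of_card_ne_zero (by simp [hK, hp.ne_zero])
  obtain ⟨m, hm, hHm⟩ := (Nat.dvd_prime_pow hp).mp (hK ▸ card_dvd_of_le hHK.le)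
  have hmn : m ≠ n + 1 := by
    rintro rfl
    exact hHK.ne (eq_of_le_of_card_ge hHK.le (by rw [hK, hHm]))
  exact hHm ▸ Nat.pow_le_pow_right hp.pos (by omega)

theorem socle_le_center (p : ℕ) (G : Type*) [Group G] : socle p G ≤ center G :=
  (closure_le _).mpr fun _ hg ↦ hg.1

section Socle

open scoped IsMulCommutative

theorem socle_eq_map_ker_powMonoidHom (p : ℕ) (G : Type*) [Group G] :
    socle p G = (powMonoidHom p : center G →* center G).ker.map (center G).subtype := by
  apply le_antisymm
  · rw [socle, closure_le]
    rintro g ⟨hg, hgp⟩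
    exact ⟨⟨g, hg⟩, Subtype.ext hgp, rfl⟩
  · rintro _ ⟨z, hz, rfl⟩
    exact subset_closure ⟨z.2, congrArg Subtype.val hz⟩

theorem IsPGroup.card_center_le_card_socle_mul {p : ℕ} [Fact p.Prime] {G : Type*} [Group G]
    [Finite G] (hG : IsPGroup p G) :
    Nat.card (center G) ≤ Nat.card (socle p G) * Nat.card ↥(center G ⊓ frattini G) := by
  set φ : center G →* center G := powMonoidHom p
  have hrange : φ.range.map (center G).subtype ≤ center G ⊓ frattini G := by
    rintro _ ⟨_, ⟨z, rfl⟩, rfl⟩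
    exact ⟨(φ z).2, hG.pow_mem_frattini (z : G)⟩
  calc Nat.card (center G) = Nat.card φ.ker * Nat.card φ.range := by
        rw [← index_ker, card_mul_index]
    _ ≤ Nat.card (socle p G) * Nat.card ↥(center G ⊓ frattini G) := by
        rw [socle_eq_map_ker_powMonoidHom, card_subtype, ← card_subtype _ φ.range]
        exact Nat.mul_le_mul_left _ (card_le_of_le hrange)

end Socle

theorem socle_index_bound_class_three
    (p : ℕ) [Fact p.Prime] (G : Type*) [Group G] [Finite G] (hG : IsPGroup p G) [Group.IsNilpotent G]
    (hclass : Group.nilpotencyClass G = 3)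
    (hZ : (Subgroup.center G).index = p ^ 3)
    (hF : Nat.card ↥(frattini G) = p ^ 3) :
    Nat.card G / (Nat.card ↥(socle p G) / Nat.card ↥(socle p G ⊓ frattini G)) < p ^ 8 := by
  have hp := (Fact.out : p.Prime)
  have hZF : Nat.card ↥(center G ⊓ frattini G) ≤ p ^ 2 := by
    refine card_le_pow_of_lt_of_card_eq_pow_succ (inf_le_right.lt_of_ne fun h ↦ ?_) hF
    have := Group.nilpotencyClass_le_two_of_commutator_le_center
      (hG.commutator_le_frattini.trans (h ▸ inf_le_left))
    omega
  have hSF : Nat.card ↥(socle p G ⊓ frattini G) ≤ p ^ 2 :=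
    (card_le_of_le (inf_le_inf_right _ (socle_le_center p G))).trans hZF
  obtain ⟨t, ht⟩ := card_dvd_of_le (inf_le_left : socle p G ⊓ frattini G ≤ socle p G)
  have htpos : 0 < t := Nat.pos_of_mul_pos_left (ht ▸ Nat.card_pos)
  have hG_le : Nat.card G ≤ t * p ^ 7 := calc
    Nat.card G = p ^ 3 * Nat.card (center G) := by rw [← hZ, index_mul_card]
    _ ≤ p ^ 3 * (Nat.card (socle p G) * Nat.card ↥(center G ⊓ frattini G)) :=
      Nat.mul_le_mul_left _ hG.card_center_le_card_socle_mul
    _ ≤ p ^ 3 * (p ^ 2 * t * p ^ 2) := by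
      rw [ht]; gcongr
    _ = t * p ^ 7 := by ring
  rw [ht, Nat.mul_div_cancel_left _ Nat.card_pos]
  exact Nat.div_lt_of_lt_mul (hG_le.trans_lt
    (Nat.mul_lt_mul_of_pos_left (Nat.pow_lt_pow_right hp.one_lt (by norm_num)) htpos))
end

section
/- Let G be a finite 2-group. Then the central quotient G/Z(G) is a dihedral 2-group (i.e., generated by two elements of order 2, including the Klein four group) if and only if |G : γ(G)Z(G)| = 4. -/
/-!
Write `Q = G ⧸ Z(G)`; since `γ(G)Z(G) / Z(G) = γ(Q)`, the index in question is `|Q : γ(Q)|`.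

In a central quotient generated by `a` and `b` we have `⟨a⟩ ∩ ⟨b⟩ = 1`: a common power of `a`
and `b` lifts to an element of `G` commuting with lifts of both generators, hence to a central
element. So if `Q` has a cyclic subgroup `⟨c⟩` of index 2, then every `g ∉ ⟨c⟩` generates `Q`
together with `c`, and `g² ∈ ⟨c⟩ ∩ ⟨g⟩` forces `g² = 1`; for any `t ∉ ⟨c⟩`, the involutions `t`
and `tc` generate `Q`. A 2-group with `|Q : γ(Q)| = 4` always has such a subgroup (the part of
Taussky's theorem that is needed here), by induction on `|Q|` modulo a central involution
`z ∈ γ(Q)`: the preimage of a cyclic subgroup of index 2 of `Q ⧸ ⟨z⟩` is `⟨u, z⟩`, and it is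
cyclic because `γ(Q) ⊆ ⟨[u, t]⟩` forces `z` to be a square in `⟨u, z⟩`.

Conversely, if `Q` is generated by two involutions, its abelianization has order at most 4, and
order at most 2 would make the nilpotent group `Q` cyclic, which a nontrivial central quotient
never is.
-/

open Subgroup
open scoped commutatorElement

section

variable {G : Type*} [Group G]

theorem Subgroup.eq_top_of_index_eq_two {H K : Subgroup G} (hH : H.index = 2) (hHK : H ≤ K)
    {t : G} (htK : t ∈ K) (htH : t ∉ H) : K = ⊤ := by
  refine (eq_top_iff' K).2 fun g ↦ ?_
  by_cases hg : g ∈ H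
  · exact hHK hg
  · have hgt : g * t⁻¹ ∈ H := by rw [mul_mem_iff_of_index_two hH, inv_mem_iff]; tauto
    simpa using K.mul_mem (hHK hgt) htK

theorem index_commutator_quotient (N : Subgroup G) [N.Normal] :
    (commutator (G ⧸ N)).index = (commutator G ⊔ N).index := by
  have hmap : (commutator G).map (QuotientGroup.mk' N) = commutator (G ⧸ N) := by
    rw [map_commutator_eq, (QuotientGroup.mk' N).range_eq_top.2 (QuotientGroup.mk'_surjective N),
      commutator_def]
  rw [← hmap, ← index_comap_of_surjective _ (QuotientGroup.mk'_surjective N), comap_map_eq,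
    QuotientGroup.ker_mk']

theorem mem_center_of_commute_of_closure_pair_eq_top {a b x : G}
    (hab : closure {(a : G ⧸ center G), (b : G ⧸ center G)} = ⊤)
    (ha : Commute a x) (hb : Commute b x) : x ∈ center G := by
  have hsup : closure {a, b} ⊔ center G = ⊤ := by
    rw [← QuotientGroup.ker_mk' (center G), ← comap_map_eq, MonoidHom.map_closure,
      Set.image_pair]
    exact (congrArg (comap _) hab).trans (comap_top _)
  have hle : closure {a, b} ⊔ center G ≤ centralizer {x} := by
    refine sup_le ((closure_le _).2 ?_) (center_le_centralizer _)
    rintro g (rfl | rfl)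
    exacts [mem_centralizer_singleton_iff.2 ha.eq, mem_centralizer_singleton_iff.2 hb.eq]
  exact mem_center_iff.2 fun g ↦ mem_centralizer_singleton_iff.1 (hle (hsup ▸ mem_top g))

theorem zpowers_inf_zpowers_eq_bot_of_closure_pair_eq_top {a b : G ⧸ center G}
    (hab : closure {a, b} = ⊤) : zpowers a ⊓ zpowers b = ⊥ := by
  obtain ⟨a, rfl⟩ := QuotientGroup.mk_surjective a
  obtain ⟨b, rfl⟩ := QuotientGroup.mk_surjective b
  refine eq_bot_iff.2 fun q ⟨hqa, hqb⟩ ↦ ?_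
  obtain ⟨i, rfl⟩ := mem_zpowers_iff.1 hqa
  obtain ⟨j, hj⟩ := mem_zpowers_iff.1 hqb
  rw [← QuotientGroup.mk_zpow, ← QuotientGroup.mk_zpow, QuotientGroup.eq] at hj
  -- `a ^ i` is `b ^ j` times a central element, so it commutes with `b` as well as with `a`
  have hb : Commute b (a ^ i) := by
    have hζ := mem_center_iff.1 hj b
    rw [show a ^ i = b ^ j * ((b ^ j)⁻¹ * a ^ i) by group]
    exact ((Commute.refl b).zpow_right j).mul_right hζ
  rw [mem_bot, ← QuotientGroup.mk_zpow, QuotientGroup.eq_one_iff]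
  exact mem_center_of_commute_of_closure_pair_eq_top hab ((Commute.refl a).zpow_right i) hb

theorem exists_orderOf_eq_two_closure_pair_eq_top_of_index_zpowers {c : G ⧸ center G}
    (hc : (zpowers c).index = 2) :
    ∃ x y : G ⧸ center G, orderOf x = 2 ∧ orderOf y = 2 ∧ closure {x, y} = ⊤ := by
  have horder : ∀ g ∉ zpowers c, orderOf g = 2 := by
    intro g hg
    have hgen : closure {c, g} = ⊤ :=
      (zpowers c).eq_top_of_index_eq_two hc (zpowers_le.2 (subset_closure (by simp)))
        (subset_closure (by simp)) hg
    have hsq : g * g ∈ zpowers c ⊓ zpowers g :=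
      ⟨mul_self_mem_of_index_two hc g, mul_mem (mem_zpowers g) (mem_zpowers g)⟩
    rw [zpowers_inf_zpowers_eq_bot_of_closure_pair_eq_top hgen, mem_bot, ← pow_two] at hsq
    exact orderOf_eq_prime hsq (by rintro rfl; exact hg (one_mem _))
  obtain ⟨t, ht⟩ : ∃ t, t ∉ zpowers c := by
    by_contra! h
    simp [(eq_top_iff' _).2 h] at hc
  have htc : t * c ∉ zpowers c := by rwa [mul_mem_cancel_right (mem_zpowers c)]
  refine ⟨t, t * c, horder t ht, horder _ htc, ?_⟩
  have htK : t ∈ closure {t, t * c} := subset_closure (by simp)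
  have hcK : c ∈ closure {t, t * c} := by
    simpa using mul_mem (inv_mem htK) (subset_closure (by simp) : t * c ∈ closure {t, t * c})
  exact (zpowers c).eq_top_of_index_eq_two hc (zpowers_le.2 hcK) htK ht

theorem commutator_eq_bot_of_isCyclic_abelianization [Group.IsNilpotent G]
    [IsCyclic (Abelianization G)] : commutator G = ⊥ := by
  -- `G ⧸ ⁅G', G⁆` maps to the cyclic `G ⧸ G'` with central kernel, so it is abelian; thus
  -- `G' = ⁅G', G⁆`, and `G'` lies in every term of the lower central series
  set N := ⁅commutator G, (⊤ : Subgroup G)⁆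
  have hN : N ≤ (Abelianization.of (G := G)).ker := by
    rw [Abelianization.ker_of]
    exact commutator_le_left _ _
  set f := QuotientGroup.lift N Abelianization.of hN
  have hker : f.ker ≤ center (G ⧸ N) := by
    intro x hx
    obtain ⟨g, rfl⟩ := QuotientGroup.mk_surjective x
    rw [MonoidHom.mem_ker, QuotientGroup.lift_mk, ← MonoidHom.mem_ker, Abelianization.ker_of] at hx
    refine mem_center_iff.2 fun y ↦ ?_
    obtain ⟨h, rfl⟩ := QuotientGroup.mk_surjective y
    rw [eq_comm, ← commutatorElement_eq_one_iff_mul_comm, ← QuotientGroup.mk'_apply,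
      ← QuotientGroup.mk'_apply, ← map_commutatorElement, QuotientGroup.mk'_apply,
      QuotientGroup.eq_one_iff]
    exact commutator_mem_commutator hx (mem_top h)
  have hGN : commutator G ≤ N := Normal.quotient_commutative_iff_commutator_le.1
    (f.isMulCommutative_of_isCyclic_of_ker_le_center hker)
  have hle : ∀ n, commutator G ≤ (⊤ : Subgroup G).lowerCentralSeries n := by
    intro n
    induction n with
    | zero => exact le_top
    | succ n ih => exact hGN.trans (commutator_mono ih le_top)
  obtain ⟨n, hn⟩ := Subgroup.nilpotent_iff_lowerCentralSeries.1 ‹Group.IsNilpotent G›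
  exact le_bot_iff.1 (hn ▸ hle n)

theorem CommGroup.card_le_orderOf_mul_orderOf {A : Type*} [CommGroup A] [Finite A] {a b : A}
    (hab : closure {a, b} = ⊤) : Nat.card A ≤ orderOf a * orderOf b := by
  set f := (zpowers a).subtype.coprod (zpowers b).subtype
  have hf : Function.Surjective f := by
    rw [← MonoidHom.range_eq_top, eq_top_iff, ← hab, closure_le]
    rintro g (rfl | rfl)
    exacts [⟨(⟨g, mem_zpowers g⟩, 1), by simp [f]⟩, ⟨(1, ⟨g, mem_zpowers g⟩), by simp [f]⟩]
  simpa [Nat.card_prod] using Nat.card_le_card_of_surjective f hf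

theorem index_commutator_eq_four_of_closure_pair_eq_top [(center G).FiniteIndex]
    (hG : IsPGroup 2 (G ⧸ center G)) {x y : G ⧸ center G} (hx : orderOf x = 2)
    (hy : orderOf y = 2) (hxy : closure {x, y} = ⊤) : (commutator (G ⧸ center G)).index = 4 := by
  have hle : (commutator (G ⧸ center G)).index ≤ 4 := by
    have hgen : closure {Abelianization.of x, Abelianization.of y} = ⊤ := by
      rw [← Set.image_pair, ← MonoidHom.map_closure, hxy, ← MonoidHom.range_eq_map,
        MonoidHom.range_eq_top]
      exact QuotientGroup.mk_surjective
    have hx' := hx ▸ orderOf_map_dvd Abelianization.of x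
    have hy' := hy ▸ orderOf_map_dvd Abelianization.of y
    exact (CommGroup.card_le_orderOf_mul_orderOf hgen).trans
      (Nat.mul_le_mul (Nat.le_of_dvd two_pos hx') (Nat.le_of_dvd two_pos hy'))
  -- a cyclic abelianization would make the nilpotent group `G ⧸ center G` cyclic, hence trivial
  have hgt : ¬ (commutator (G ⧸ center G)).index ∣ 2 := by
    intro h2
    have : IsCyclic (Abelianization (G ⧸ center G)) := isCyclic_of_card_dvd_prime h2
    have : Group.IsNilpotent (G ⧸ center G) := hG.isNilpotent
    rw [commutator_eq_bot_of_isCyclic_abelianization, index_bot] at h2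
    have : IsCyclic (G ⧸ center G) := isCyclic_of_card_dvd_prime h2
    have := isMulCommutative_of_isCyclic_quotient_center_self G
    have hZ : center G = ⊤ := (commutator_eq_bot_iff_center_eq_top G).1 (commutator_eq_bot G)
    obtain ⟨g, rfl⟩ := QuotientGroup.mk_surjective x
    rw [(QuotientGroup.eq_one_iff g).2 (hZ ▸ mem_top g), orderOf_one] at hx
    exact absurd hx (by norm_num)
  obtain ⟨n, hn⟩ := hG.index (commutator (G ⧸ center G))
  rw [hn] at hle hgt ⊢
  have : n ≤ 2 := (Nat.pow_le_pow_iff_right one_lt_two).1 hle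
  interval_cases n <;> simp_all

theorem IsPGroup.exists_orderOf_eq_prime_mem_inf_center {p : ℕ} [Fact p.Prime] [Finite G]
    (hG : IsPGroup p G) {H : Subgroup G} [H.Normal] (hH : H ≠ ⊥) :
    ∃ z ∈ H ⊓ center G, orderOf z = p := by
  have : Nontrivial H := (nontrivial_iff_ne_bot H).2 hH
  obtain ⟨n, hn, hcard⟩ := (hG.to_subgroup H).nontrivial_iff_card.1 this
  obtain ⟨b, hb, hb1⟩ :=
    (hG.of_equiv ConjAct.toConjAct).exists_fixed_point_of_prime_dvd_card_of_fixed_point H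
      (hcard ▸ dvd_pow_self p hn.ne') (a := 1) (fun g ↦ smul_one g)
  have hbz : (b : G) ∈ H ⊓ center G := by
    refine ⟨b.2, mem_center_iff.2 fun g ↦ ?_⟩
    have := congrArg Subtype.val (hb (ConjAct.toConjAct g))
    rw [ConjAct.Subgroup.val_conj_smul, ConjAct.smul_def, ConjAct.ofConjAct_toConjAct] at this
    exact mul_inv_eq_iff_eq_mul.1 this
  have : Nontrivial (H ⊓ center G : Subgroup G) :=
    (nontrivial_iff_ne_bot _).2 fun h ↦ hb1 (Subtype.ext ((mem_bot.1 (h ▸ hbz)).symm))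
  obtain ⟨m, hm, hcard'⟩ := (hG.to_subgroup _).nontrivial_iff_card.1 this
  obtain ⟨z, hz⟩ := exists_prime_orderOf_dvd_card' p (hcard' ▸ dvd_pow_self p hm.ne')
  exact ⟨z, z.2, (orderOf_coe z).trans hz⟩

theorem exists_index_zpowers_eq_two_of_card_eq_eight [Finite G] (h8 : Nat.card G = 8)
    (hG : commutator G ≠ ⊥) : ∃ c : G, (zpowers c).index = 2 := by
  have hcomm : ¬ IsMulCommutative G := fun h ↦ hG ((commutator_eq_bot_iff G).2 h)
  obtain ⟨c, hc⟩ : ∃ c : G, ¬ orderOf c ∣ 2 := by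
    by_contra! h
    exact hcomm ⟨⟨fun a b ↦ (Commute.of_orderOf_dvd_two h a b).eq⟩⟩
  obtain ⟨i, hi, hci⟩ := (Nat.dvd_prime_pow Nat.prime_two).1
    (by simpa [h8] using orderOf_dvd_natCard c : orderOf c ∣ 2 ^ 3)
  have hindex := card_mul_index (zpowers c)
  rw [Nat.card_zpowers, h8, hci] at hindex
  interval_cases i
  · simp_all
  · simp_all
  · exact ⟨c, by omega⟩
  · have := isCyclic_of_orderOf_eq_card c (by rw [hci, h8]; rfl)
    exact absurd IsCyclic.isMulCommutative hcomm

theorem IsPGroup.mem_zpowers_sq [Finite G] (hG : IsPGroup 2 G) {w z : G} (hw : 4 ≤ orderOf w)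
    (hz : z ∈ zpowers w) (hz2 : orderOf z = 2) : z ∈ zpowers (w ^ 2) := by
  obtain ⟨i, rfl⟩ := mem_powers_iff_mem_zpowers.2 hz
  obtain ⟨k, rfl⟩ | hodd := Nat.even_or_odd i
  · exact ⟨k, by simp [← two_mul, pow_mul]⟩
  · obtain ⟨m, hm⟩ := IsPGroup.iff_orderOf.1 hG w
    have hcop : (orderOf w).Coprime i := hm ▸ (Nat.coprime_two_left.2 hodd).pow_left m
    rw [hcop.orderOf_pow] at hz2
    omega

section CommutatorRightHom

variable {C : Subgroup G} [C.Normal] (hcomm : ∀ x ∈ C, ∀ y ∈ C, Commute x y)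

def commutatorRightHom (t : G) : C →* G :=
  MonoidHom.mk' (fun x ↦ ⁅(x : G), t⁆) fun x y ↦ by
    have hx : ⁅(x : G), t⁆ ∈ C := commutator_le_left C ⊤ (commutator_mem_commutator x.2 (mem_top t))
    have hy : ⁅(y : G), t⁆ ∈ C := commutator_le_left C ⊤ (commutator_mem_commutator y.2 (mem_top t))
    rw [coe_mul, commutatorElement_mul_left_eq_conj_mul, (hcomm _ x.2 _ hy).eq,
      mul_inv_cancel_right, (hcomm _ hy _ hx).eq]

@[simp]
theorem commutatorRightHom_apply (t : G) (x : C) : commutatorRightHom hcomm t x = ⁅(x : G), t⁆ :=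
  rfl

theorem commutator_le_range_commutatorRightHom (hC : C.index = 2) {t : G} (ht : t ∉ C) :
    commutator G ≤ (commutatorRightHom hcomm t).range := by
  have hleft : ∀ x ∈ C, ∀ g, ⁅x, g⁆ ∈ (commutatorRightHom hcomm t).range := by
    intro x hx g
    by_cases hg : g ∈ C
    · rw [(hcomm x hx g hg).commutator_eq]
      exact one_mem _
    · have hy : g * t⁻¹ ∈ C := by rw [mul_mem_iff_of_index_two hC, inv_mem_iff]; tauto
      have hxt : ⁅x, t⁆ ∈ C := commutator_le_left C ⊤ (commutator_mem_commutator hx (mem_top t))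
      have hconj : ⁅x, g⁆ = (g * t⁻¹) * ⁅x, t⁆ * (g * t⁻¹)⁻¹ := by
        calc ⁅x, g⁆ = x * (g * t⁻¹) * t * x⁻¹ * t⁻¹ * (g * t⁻¹)⁻¹ := by
              simp only [commutatorElement_def]; group
          _ = (g * t⁻¹) * x * t * x⁻¹ * t⁻¹ * (g * t⁻¹)⁻¹ := by rw [(hcomm x hx _ hy).eq]
          _ = (g * t⁻¹) * ⁅x, t⁆ * (g * t⁻¹)⁻¹ := by simp only [commutatorElement_def]; group
      rw [hconj, (hcomm _ hy _ hxt).eq, mul_inv_cancel_right]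
      exact ⟨⟨x, hx⟩, rfl⟩
  rw [commutator_def, commutator_le]
  intro g _ h _
  by_cases hg : g ∈ C
  · exact hleft g hg h
  by_cases hh : h ∈ C
  · rw [← commutatorElement_inv]
    exact inv_mem (hleft h hh g)
  · have hhg : h * g⁻¹ ∈ C := by rw [mul_mem_iff_of_index_two hC, inv_mem_iff]; tauto
    have : ⁅g, h⁆ = ⁅h * g⁻¹, g⁆⁻¹ := by simp only [commutatorElement_def]; group
    rw [this]
    exact inv_mem (hleft _ hhg g)

end CommutatorRightHom

theorem IsPGroup.mem_zpowers_of_mem_commutator [Finite G] (hG : IsPGroup 2 G) {C : Subgroup G}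
    (hC : C.index = 2) {u z : G} (hu : u ∈ C) (hz : z ∈ center G) (hz2 : orderOf z = 2)
    (hCuz : ∀ x ∈ C, ∃ i j : ℤ, x = u ^ i * z ^ j) (h4 : 4 ≤ Nat.card (commutator G))
    (hzG' : z ∈ commutator G) : z ∈ zpowers u := by
  have := normal_of_index_eq_two hC
  have hzc : ∀ g, Commute z g := fun g ↦ (mem_center_iff.1 hz g).symm
  have hcomm : ∀ x ∈ C, ∀ y ∈ C, Commute x y := by
    intro x hx y hy
    obtain ⟨i, j, rfl⟩ := hCuz x hx
    obtain ⟨i', j', rfl⟩ := hCuz y hy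
    exact ((Commute.zpow_zpow_self u i i').mul_right ((hzc _).zpow_left j').symm).mul_left
      ((hzc _).zpow_left j)
  obtain ⟨t, ht⟩ : ∃ t, t ∉ C := by
    by_contra! h
    simp [(eq_top_iff' C).2 h] at hC
  have hrange : (commutatorRightHom hcomm t).range ≤ zpowers ⁅u, t⁆ := by
    rintro _ ⟨x, rfl⟩
    obtain ⟨i, j, hx⟩ := hCuz x x.2
    have hux : ⁅(x : G), t⁆ = ⁅u ^ i, t⁆ := by
      rw [hx, commutatorElement_mul_left_eq_conj_mul, ((hzc t).zpow_left j).commutator_eq,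
        mul_one, mul_inv_cancel, one_mul]
    have hui : ⁅u ^ i, t⁆ = commutatorRightHom hcomm t (⟨u, hu⟩ ^ i) := by simp
    rw [commutatorRightHom_apply, hux, hui, map_zpow]
    exact zpow_mem (mem_zpowers _) i
  have hG'w := (commutator_le_range_commutatorRightHom hcomm hC ht).trans hrange
  have hw4 : 4 ≤ orderOf ⁅u, t⁆ :=
    h4.trans ((card_le_of_le hG'w).trans (Nat.card_zpowers _).le)
  have hzw := hG.mem_zpowers_sq hw4 (hG'w hzG') hz2
  -- squares in `C` lie in `⟨u⟩`, because `z ^ 2 = 1`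
  obtain ⟨i, j, hw⟩ := hCuz _ (commutator_le_left C ⊤ (commutator_mem_commutator hu (mem_top t)))
  have hw2 : ⁅u, t⁆ ^ 2 = (u ^ i) ^ 2 := by
    have hzj : (z ^ j) ^ 2 = 1 := by
      rw [← zpow_natCast, ← zpow_mul, mul_comm, zpow_mul, zpow_natCast, ← hz2, pow_orderOf_eq_one,
        one_zpow]
    rw [hw, ((hzc _).zpow_left j).symm.mul_pow, hzj, mul_one]
  exact zpowers_le.2 (hw2 ▸ pow_mem (zpow_mem (mem_zpowers u) i) 2) hzw

theorem IsPGroup.exists_index_zpowers_eq_two_of_quotient [Finite G] (hG : IsPGroup 2 G) {z : G}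
    (hz : z ∈ center G) (hz2 : orderOf z = 2) (hzG' : z ∈ commutator G)
    (h4 : 4 ≤ Nat.card (commutator G)) [(zpowers z).Normal] {c : G ⧸ zpowers z}
    (hc : (zpowers c).index = 2) : ∃ u : G, (zpowers u).index = 2 := by
  obtain ⟨u, rfl⟩ := QuotientGroup.mk'_surjective _ c
  set C := comap (QuotientGroup.mk' (zpowers z)) (zpowers (QuotientGroup.mk' _ u))
  have hC : C.index = 2 := (index_comap_of_surjective _ (QuotientGroup.mk'_surjective _)).trans hc
  have hu : u ∈ C := mem_zpowers _
  have hCuz : ∀ x ∈ C, ∃ i j : ℤ, x = u ^ i * z ^ j := by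
    intro x hx
    obtain ⟨i, hi⟩ := mem_zpowers_iff.1 (mem_comap.1 hx)
    rw [← map_zpow, QuotientGroup.mk'_apply, QuotientGroup.mk'_apply, QuotientGroup.eq] at hi
    obtain ⟨j, hj⟩ := mem_zpowers_iff.1 hi
    exact ⟨i, j, by rw [hj]; group⟩
  have hzu := hG.mem_zpowers_of_mem_commutator hC hu hz hz2 hCuz h4 hzG'
  refine ⟨u, ?_⟩
  have hCu : zpowers u = C := le_antisymm (zpowers_le.2 hu) fun x hx ↦ by
    obtain ⟨i, j, rfl⟩ := hCuz x hx
    exact mul_mem (zpow_mem (mem_zpowers u) i) (zpow_mem hzu j)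
  rw [hCu, hC]

theorem IsPGroup.exists_index_zpowers_eq_two [Finite G] (hG : IsPGroup 2 G)
    (h4 : (commutator G).index = 4) : ∃ c : G, (zpowers c).index = 2 := by
  induction hn : Nat.card G using Nat.strong_induction_on generalizing G with
  | _ n ih =>
  have hcard : Nat.card (commutator G) * 4 = Nat.card G := h4 ▸ card_mul_index _
  obtain ⟨k, hk⟩ := IsPGroup.iff_card.1 (hG.to_subgroup (commutator G))
  match k, hk with
  | 0, hk =>
    obtain ⟨c, hc⟩ := exists_prime_orderOf_dvd_card' 2 (by rw [← hcard, hk]; norm_num)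
    refine ⟨c, ?_⟩
    have := card_mul_index (zpowers c)
    rw [Nat.card_zpowers, hc, ← hcard, hk] at this
    omega
  | 1, hk =>
    exact exists_index_zpowers_eq_two_of_card_eq_eight (by omega)
      (mt card_eq_one.2 (by rw [hk]; norm_num))
  | k + 2, hk =>
    obtain ⟨z, hz, hz2⟩ := hG.exists_orderOf_eq_prime_mem_inf_center
      (mt card_eq_one.2 (by rw [hk]; simp))
    obtain ⟨hzG', hz⟩ := mem_inf.1 hz
    have : (zpowers z).Normal := ⟨fun x hx g ↦ by
      rw [mem_center_iff.1 (zpowers_le.2 hz hx) g, mul_inv_cancel_right]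
      exact hx⟩
    have hlt : Nat.card (G ⧸ zpowers z) < n := by
      have := card_mul_index (zpowers z)
      rw [Nat.card_zpowers, hz2] at this
      rw [← index_eq_card]
      have := (zpowers z).index_ne_zero_of_finite
      omega
    have h4' : (commutator (G ⧸ zpowers z)).index = 4 := by
      rw [index_commutator_quotient, sup_of_le_left (zpowers_le.2 hzG'), h4]
    obtain ⟨c, hc⟩ := ih _ hlt (hG.to_quotient _) h4' rfl
    exact hG.exists_index_zpowers_eq_two_of_quotient hz hz2 hzG'
      (by rw [hk, pow_add]; exact Nat.le_mul_of_pos_left _ (by positivity)) hc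

end

theorem central_quotient_dihedral_iff_index_four
    (G : Type*) [Group G] [Finite G] (hG : IsPGroup 2 G) :
    (∃ x y : G ⧸ Subgroup.center G,
        orderOf x = 2 ∧ orderOf y = 2 ∧ Subgroup.closure {x, y} = ⊤) ↔
      (commutator G ⊔ Subgroup.center G).index = 4 := by
  have hQ : IsPGroup 2 (G ⧸ center G) := hG.to_quotient _
  rw [← index_commutator_quotient]
  constructor
  · rintro ⟨x, y, hx, hy, hxy⟩
    exact index_commutator_eq_four_of_closure_pair_eq_top hQ hx hy hxy
  · intro h4
    obtain ⟨c, hc⟩ := hQ.exists_index_zpowers_eq_two h4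
    exact exists_orderOf_eq_two_closure_pair_eq_top_of_index_zpowers hc
end

section
/- Let G be a finite 2-group with cyclic center Z(G) of order 2^m (m ≥ 1) and with G/Z(G) dihedral of order 2^n (n ≥ 2). Then G is isomorphic to exactly one of the groups D_{2^{m|n}}, Q_{2^{m|n}}, or S_{2^{m|n}} given by the presentations: D = ⟨a,b,c | a²=1, b²=1, (ab)^{2^{n−1}} = c^{2^{m−1}}, c^{2^m}=[a,c]=[b,c]=1⟩; Q = ⟨a,b,c | a²=c, b²=c, (ab)^{2^{n−1}} = c^{2^{m−1}+2^{n−1}}, c^{2^m}=[a,c]=[b,c]=1⟩; S = ⟨a,b,c | a²=1, b²=c, (ab)^{2^{n−1}} = c^{2^{m−1}+2^{n−2}}, c^{2^m}=[a,c]=[b,c]=1⟩ (up to the exceptional isomorphisms for n = 2). -/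
/-!
Lift the two involutions generating `G ⧸ Z(G)` to `A, B ∈ G`. Multiplying them by powers of a
generator `z` of the cyclic centre, we may assume `A² = z^e₁`, `B² = z^e₂` with `e₁, e₂ ∈ {0, 1}`;
up to swapping `A` and `B` this gives the three families. As `G ⧸ Z(G)` is not cyclic, the image of
`A * B` has order `2 ^ (n - 1) = 2 * M`. Put `u = (A * B) ^ M` and `v = u² (A² B²)^(-M)`, which is
central. Conjugation by `A` and by `B` both send `u` to `v⁻¹ u`, so `v ≠ 1` (otherwise `u` would be
central), and `v² = 1` because `A²` is central. Hence `v` is the unique involution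
`z ^ 2 ^ (m - 1)` of `Z(G)`, which is the third relation. Conversely, any group generated by three
elements satisfying the relations has order dividing `2 ^ (m + n)`: modulo the central subgroup
`⟨c⟩` it is generated by two involutions whose product has order dividing `2 ^ (n - 1)`, so
`⟨ab⟩` has index at most `2` there. Hence the natural surjection from the presented group onto `G`
is an isomorphism.
-/

namespace MIP

open scoped commutatorElement

def a : FreeGroup (Fin 3) := FreeGroup.of 0
def b : FreeGroup (Fin 3) := FreeGroup.of 1
def c : FreeGroup (Fin 3) := FreeGroup.of 2

/-- Relations of `D_{2^{m|n}}`. -/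
def relsD (m n : ℕ) : Set (FreeGroup (Fin 3)) :=
  {a ^ 2, b ^ 2, (a * b) ^ (2 ^ (n - 1)) * (c ^ (2 ^ (m - 1)))⁻¹,
    c ^ (2 ^ m), ⁅a, c⁆, ⁅b, c⁆}

/-- Relations of `Q_{2^{m|n}}`. -/
def relsQ (m n : ℕ) : Set (FreeGroup (Fin 3)) :=
  {a ^ 2 * c⁻¹, b ^ 2 * c⁻¹, (a * b) ^ (2 ^ (n - 1)) * (c ^ (2 ^ (m - 1) + 2 ^ (n - 1)))⁻¹,
    c ^ (2 ^ m), ⁅a, c⁆, ⁅b, c⁆}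

/-- Relations of `S_{2^{m|n}}`. -/
def relsS (m n : ℕ) : Set (FreeGroup (Fin 3)) :=
  {a ^ 2, b ^ 2 * c⁻¹, (a * b) ^ (2 ^ (n - 1)) * (c ^ (2 ^ (m - 1) + 2 ^ (n - 2)))⁻¹,
    c ^ (2 ^ m), ⁅a, c⁆, ⁅b, c⁆}

open Subgroup

section Involutions

variable {Q : Type*} [Group Q] {x y : Q}

theorem card_dvd_two_mul_orderOf_mul (hx : x ^ 2 = 1) (hy : y ^ 2 = 1)
    (hgen : closure {x, y} = ⊤) : Nat.card Q ∣ 2 * orderOf (x * y) := by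
  set H := zpowers (x * y)
  have hx' : x⁻¹ = x := inv_eq_of_mul_eq_one_right (by rwa [← sq])
  have hy' : y⁻¹ = y := inv_eq_of_mul_eq_one_right (by rwa [← sq])
  have hinv : ∀ s ∈ ({x, y} : Set Q), s⁻¹ = s := by
    rintro s (hs | hs) <;> rw [hs] <;> assumption
  -- left multiplication by `x` or `y` interchanges the cosets `H` and `x⁻¹ H`
  have hstep : ∀ s ∈ ({x, y} : Set Q), ∀ g, x * g ∈ H ∨ g ∈ H → x * (s * g) ∈ H ∨ s * g ∈ H := by
    rintro s (hs | hs) g hg <;> rw [hs]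
    · rw [← mul_assoc, ← sq, hx, one_mul]
      exact hg.symm
    · have hyg : y * g = (x * y)⁻¹ * (x * g) := by
        rw [mul_inv_rev, hx', hy', mul_assoc, ← mul_assoc x, ← sq, hx, one_mul]
      rw [← mul_assoc, hyg]
      exact hg.symm.imp (mul_mem (mem_zpowers _)) (mul_mem (inv_mem (mem_zpowers _)))
  have hindex : H.index ∣ 2 := by
    refine index_dvd_two_iff'.mpr ⟨x, fun g => ?_⟩
    induction (hgen ▸ mem_top g : g ∈ closure {x, y}) using closure_induction_left with
    | one => exact Or.inr H.one_mem
    | mul_left s hs g _ ih => exact hstep s hs g ih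
    | inv_mul_cancel s hs g _ ih => rw [hinv s hs]; exact hstep s hs g ih
  rw [← card_mul_index H, Nat.card_zpowers, mul_comm]
  exact mul_dvd_mul_right hindex _

theorem orderOf_mul_eq_two_pow_pred {n : ℕ} (hcard : Nat.card Q = 2 ^ n) (hQ : ¬IsCyclic Q)
    (hx : x ^ 2 = 1) (hy : y ^ 2 = 1) (hgen : closure {x, y} = ⊤) :
    orderOf (x * y) = 2 ^ (n - 1) := by
  have : Finite Q := Nat.finite_of_card_ne_zero (by simp [hcard])
  obtain ⟨k, hkn, hk⟩ := (Nat.dvd_prime_pow Nat.prime_two).mp (hcard ▸ orderOf_dvd_natCard (x * y))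
  have hnk : n ≤ k + 1 := by
    have h := card_dvd_two_mul_orderOf_mul hx hy hgen
    rw [hcard, hk, ← pow_succ'] at h
    exact (Nat.pow_dvd_pow_iff_le_right (by norm_num)).mp h
  have hkn' : k ≠ n := by
    rintro rfl
    refine hQ (isCyclic_iff_exists_zpowers_eq_top.mpr ⟨x * y, eq_top_of_card_eq _ ?_⟩)
    rw [Nat.card_zpowers, hk, hcard]
  rw [hk]
  congr 1
  omega

end Involutions

section Center

variable {G : Type*} [Group G]

theorem not_isCyclic_quotient_center [Nontrivial (G ⧸ center G)] : ¬IsCyclic (G ⧸ center G) := by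
  intro h
  have hZ := center_eq_top (hG := isMulCommutative_of_isCyclic_quotient_center_self G)
  obtain ⟨q, hq⟩ := exists_ne (1 : G ⧸ center G)
  obtain ⟨g, rfl⟩ := QuotientGroup.mk_surjective q
  exact hq ((QuotientGroup.eq_one_iff g).mpr (hZ ▸ mem_top g))

theorem closure_sup_eq_top_of_closure_image_eq_top (N : Subgroup G) [N.Normal] {s : Set G}
    (h : closure ((↑) '' s : Set (G ⧸ N)) = ⊤) : closure s ⊔ N = ⊤ := by
  have := comap_map_eq (QuotientGroup.mk' N) (closure s)
  rwa [QuotientGroup.ker_mk', MonoidHom.map_closure, QuotientGroup.coe_mk', h, comap_top,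
    eq_comm] at this

theorem mem_center_of_forall_commute {S : Set G} (hS : closure S = ⊤) {g : G}
    (h : ∀ s ∈ S, Commute s g) : g ∈ center G := by
  rw [← SetLike.mem_coe, ← Set.singleton_subset_iff, ← centralizer_eq_top_iff_subset, eq_top_iff,
    ← hS, closure_le]
  exact fun s hs => mem_centralizer_singleton_iff.mpr (h s hs)

theorem card_dvd_of_closure_eq_top {A B C : G} {e₁ e₂ e₃ N M : ℕ}
    (hgen : closure {A, B, C} = ⊤) (h₁ : A ^ 2 = C ^ e₁) (h₂ : B ^ 2 = C ^ e₂)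
    (h₃ : (A * B) ^ N = C ^ e₃) (h₄ : C ^ M = 1) (hA : Commute A C) (hB : Commute B C) :
    Nat.card G ∣ 2 * N * M := by
  have hC : C ∈ center G := mem_center_of_forall_commute hgen (by
    rintro _ (rfl | rfl | rfl)
    exacts [hA, hB, Commute.refl _])
  have : (zpowers C).Normal :=
    ⟨fun g hg h => by rwa [mem_center_iff.mp (zpowers_le.mpr hC hg) h, mul_inv_cancel_right]⟩
  have hmk : ∀ k, ((C ^ k : G) : G ⧸ zpowers C) = 1 := fun k =>
    (QuotientGroup.eq_one_iff _).mpr (pow_mem (mem_zpowers C) k)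
  have hgen' : closure {(A : G ⧸ zpowers C), (B : G ⧸ zpowers C)} = ⊤ := by
    have hC1 : (C : G ⧸ zpowers C) = 1 := (QuotientGroup.eq_one_iff _).mpr (mem_zpowers C)
    have := MonoidHom.map_closure (QuotientGroup.mk' (zpowers C)) {A, B, C}
    rw [hgen, map_top_of_surjective _ (QuotientGroup.mk'_surjective _)] at this
    simpa [Set.image_insert_eq, hC1, Set.insert_comm _ (1 : G ⧸ zpowers C),
      Set.pair_comm _ (1 : G ⧸ zpowers C), closure_insert_one] using this.symm
  have hquot := card_dvd_two_mul_orderOf_mul (x := (A : G ⧸ zpowers C)) (y := B)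
    (by rw [← QuotientGroup.mk_pow, h₁, hmk]) (by rw [← QuotientGroup.mk_pow, h₂, hmk]) hgen'
  have hord : orderOf ((A : G ⧸ zpowers C) * B) ∣ N :=
    orderOf_dvd_of_pow_eq_one (by rw [← QuotientGroup.mk_mul, ← QuotientGroup.mk_pow, h₃, hmk])
  rw [card_eq_card_quotient_mul_card_subgroup (zpowers C), Nat.card_zpowers]
  exact mul_dvd_mul (hquot.trans (mul_dvd_mul_left 2 hord)) (orderOf_dvd_of_pow_eq_one h₄)

variable {A B : G}

theorem closure_pair_sup_center_eq_top
    (hgen : closure {(A : G ⧸ center G), (B : G ⧸ center G)} = ⊤) :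
    closure {A, B} ⊔ center G = ⊤ :=
  closure_sup_eq_top_of_closure_image_eq_top _ (by rwa [Set.image_pair])

theorem mem_center_of_commute (hgen : closure {(A : G ⧸ center G), (B : G ⧸ center G)} = ⊤)
    {g : G} (hA : Commute A g) (hB : Commute B g) : g ∈ center G := by
  refine mem_center_of_forall_commute (S := {A, B} ∪ center G) ?_ ?_
  · rw [Subgroup.closure_union, closure_eq, closure_pair_sup_center_eq_top hgen]
  · rintro s ((rfl | rfl) | hs)
    exacts [hA, hB, (mem_center_iff.mp hs g).symm]

theorem mul_rev_pow_of_sq_mem_center (hA : A ^ 2 ∈ center G) (hB : B ^ 2 ∈ center G) (M : ℕ) :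
    (B * A) ^ M = ((A * B) ^ M)⁻¹ * (A ^ 2 * B ^ 2) ^ M := by
  have hBA : B * A = (A * B)⁻¹ * (A ^ 2 * B ^ 2) :=
    calc B * A = B⁻¹ * (B ^ 2 * A) := by rw [sq]; group
      _ = B⁻¹ * (A * B ^ 2) := by rw [mem_center_iff.mp hB A]
      _ = (A * B)⁻¹ * (A ^ 2 * B ^ 2) := by rw [sq, sq]; group
  have hcomm : Commute (A * B)⁻¹ (A ^ 2 * B ^ 2) := mem_center_iff.mp (mul_mem hA hB) _
  rw [hBA, hcomm.mul_pow, inv_pow]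

theorem conj_mul_pow_of_sq_mem_center (hA : A ^ 2 ∈ center G) (hB : B ^ 2 ∈ center G) (M : ℕ)
    {X : G} (hX : X ∈ ({A, B} : Set G)) :
    X * (A * B) ^ M * X⁻¹ = ((A * B) ^ M)⁻¹ * (A ^ 2 * B ^ 2) ^ M := by
  rw [← mul_rev_pow_of_sq_mem_center hA hB, ← conj_pow]
  congr 1
  rcases hX with rfl | rfl
  · calc X * (X * B) * X⁻¹ = X ^ 2 * B * X⁻¹ := by rw [sq]; group
      _ = B * X ^ 2 * X⁻¹ := by rw [mem_center_iff.mp hA B]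
      _ = B * X := by rw [sq]; group
  · group

theorem sq_eq_one_of_conj_eq_mul {X u w : G} (hX : X ^ 2 ∈ center G) (hw : w ∈ center G)
    (h : X * u * X⁻¹ = w * u) : w ^ 2 = 1 := by
  have h2 : X ^ 2 * u * (X ^ 2)⁻¹ = w * w * u :=
    calc X ^ 2 * u * (X ^ 2)⁻¹ = X * (X * u * X⁻¹) * X⁻¹ := by rw [sq]; group
      _ = X * w * u * X⁻¹ := by rw [h]; group
      _ = w * (X * u * X⁻¹) := by rw [mem_center_iff.mp hw X]; group
      _ = w * w * u := by rw [h, mul_assoc]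
  rwa [← mem_center_iff.mp hX u, mul_inv_cancel_right, eq_comm, mul_eq_right, ← sq] at h2

theorem mul_pow_mul_inv_mem_center_and_orderOf_eq_two (hA : A ^ 2 ∈ center G)
    (hB : B ^ 2 ∈ center G) (hgen : closure {(A : G ⧸ center G), (B : G ⧸ center G)} = ⊤)
    {M : ℕ} (hM : M ≠ 0) (hord : orderOf ((A : G ⧸ center G) * B) = 2 * M) :
    (A * B) ^ (2 * M) * ((A ^ 2 * B ^ 2) ^ M)⁻¹ ∈ center G ∧
      orderOf ((A * B) ^ (2 * M) * ((A ^ 2 * B ^ 2) ^ M)⁻¹) = 2 := by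
  set u := (A * B) ^ M
  set d := (A ^ 2 * B ^ 2) ^ M
  have hd : d ∈ center G := pow_mem (mul_mem hA hB) M
  rw [pow_mul']
  set v := u ^ 2 * d⁻¹
  have hu2 : u ^ 2 ∈ center G := by
    rw [← QuotientGroup.eq_one_iff, ← pow_mul', QuotientGroup.mk_pow, QuotientGroup.mk_mul, ← hord,
      pow_orderOf_eq_one]
  have hv : v ∈ center G := mul_mem hu2 (inv_mem hd)
  have hconj : ∀ X ∈ ({A, B} : Set G), X * u * X⁻¹ = v⁻¹ * u := fun X hX => by
    rw [conj_mul_pow_of_sq_mem_center hA hB M hX, mul_inv_rev, inv_inv, mem_center_iff.mp hd u⁻¹,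
      sq]
    group
  have hv1 : v ≠ 1 := by
    intro hv1
    have hcomm : ∀ X ∈ ({A, B} : Set G), Commute X u := fun X hX => by
      rw [Commute, SemiconjBy, ← mul_inv_eq_iff_eq_mul, hconj X hX, hv1, inv_one, one_mul]
    have hu : u ∈ center G := mem_center_of_commute hgen (hcomm A (by simp)) (hcomm B (by simp))
    refine pow_ne_one_of_lt_orderOf hM (by omega : M < orderOf ((A : G ⧸ center G) * B)) ?_
    rw [← QuotientGroup.mk_mul, ← QuotientGroup.mk_pow, QuotientGroup.eq_one_iff]
    exact hu
  have hv2 : v ^ 2 = 1 := by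
    rw [← inv_eq_one, ← inv_pow]
    exact sq_eq_one_of_conj_eq_mul hA (inv_mem hv) (hconj A (by simp))
  exact ⟨hv, orderOf_eq_prime hv2 hv1⟩

theorem eq_pow_two_pow_pred_of_orderOf_eq_two {z v : G} {m : ℕ} (hz : orderOf z = 2 ^ m)
    (hv : v ∈ zpowers z) (hv2 : orderOf v = 2) : v = z ^ 2 ^ (m - 1) := by
  obtain ⟨k, rfl⟩ := mem_zpowers_iff.mp hv
  have hdvd : ∀ l : ℤ, z ^ l = 1 ↔ (2 : ℤ) ^ m ∣ l := fun l => by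
    rw [← orderOf_dvd_iff_zpow_eq_one, hz]; push_cast; rfl
  have h2k : (2 : ℤ) ^ m ∣ 2 * k := by
    rw [← hdvd, mul_comm, zpow_mul]
    exact_mod_cast hv2 ▸ pow_orderOf_eq_one (z ^ k)
  have hk : ¬(2 : ℤ) ^ m ∣ k := by
    rw [← hdvd, ← orderOf_eq_one_iff, hv2]; norm_num
  obtain _ | m := m
  · simp at hk
  obtain ⟨j, rfl⟩ : (2 : ℤ) ^ m ∣ k := by
    rwa [pow_succ', mul_dvd_mul_iff_left two_ne_zero] at h2k
  obtain ⟨i, rfl⟩ : Odd j := by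
    rw [← Int.not_even_iff_odd]
    rintro ⟨i, rfl⟩
    exact hk ⟨i, by ring⟩
  have h1 : z ^ ((2 : ℤ) ^ (m + 1)) = 1 := (hdvd _).mpr dvd_rfl
  rw [show (2 : ℤ) ^ m * (2 * i + 1) = 2 ^ (m + 1) * i + 2 ^ m by ring, zpow_add, zpow_mul, h1,
    one_zpow, one_mul, Nat.add_sub_cancel, ← zpow_natCast]
  norm_cast

theorem exists_mk_eq_and_sq_eq_pow {z : G} (hZ : center G = zpowers z) (x : G ⧸ center G)
    (hx : x ^ 2 = 1) : ∃ (A : G) (e : ℕ), (A : G ⧸ center G) = x ∧ e < 2 ∧ A ^ 2 = z ^ e := by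
  obtain ⟨A, rfl⟩ := QuotientGroup.mk_surjective x
  obtain ⟨k, hk⟩ : ∃ k : ℤ, z ^ k = A ^ 2 := by
    rw [← mem_zpowers_iff, ← hZ, ← QuotientGroup.eq_one_iff, QuotientGroup.mk_pow]
    exact hx
  have hzj : ∀ j : ℤ, (z ^ j)⁻¹ ∈ center G := fun j => inv_mem (hZ ▸ zpow_mem_zpowers z j)
  obtain ⟨j, hj⟩ := Int.even_or_odd' k
  have hsq : (A * (z ^ j)⁻¹) ^ 2 = z ^ (k - 2 * j) := by
    rw [Commute.mul_pow (mem_center_iff.mp (hzj j) A), ← hk, inv_pow, ← zpow_natCast, ← zpow_mul,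
      ← zpow_neg, ← zpow_add]
    ring_nf
  have hmk : ((A * (z ^ j)⁻¹ : G) : G ⧸ center G) = A := by
    rw [QuotientGroup.mk_mul, (QuotientGroup.eq_one_iff _).mpr (hzj j), mul_one]
  rcases hj with rfl | rfl
  · exact ⟨_, 0, hmk, by norm_num, by rw [hsq]; simp⟩
  · exact ⟨_, 1, hmk, by norm_num, by rw [hsq]; simp⟩

end Center

def rels (m n e₁ e₂ e₃ : ℕ) : Set (FreeGroup (Fin 3)) :=
  {a ^ 2 * (c ^ e₁)⁻¹, b ^ 2 * (c ^ e₂)⁻¹, (a * b) ^ (2 ^ (n - 1)) * (c ^ e₃)⁻¹,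
    c ^ (2 ^ m), ⁅a, c⁆, ⁅b, c⁆}

theorem relsD_eq (m n : ℕ) : relsD m n = rels m n 0 0 (2 ^ (m - 1)) := by
  simp [relsD, rels]

theorem relsQ_eq (m n : ℕ) : relsQ m n = rels m n 1 1 (2 ^ (m - 1) + 2 ^ (n - 1)) := by
  simp [relsQ, rels]

theorem relsS_eq (m n : ℕ) : relsS m n = rels m n 0 1 (2 ^ (m - 1) + 2 ^ (n - 2)) := by
  simp [relsS, rels]

theorem lift_rels_eq_one_iff {P : Type*} [Group P] {m n e₁ e₂ e₃ : ℕ} {A B C : P} :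
    (∀ r ∈ rels m n e₁ e₂ e₃, FreeGroup.lift ![A, B, C] r = 1) ↔
      A ^ 2 = C ^ e₁ ∧ B ^ 2 = C ^ e₂ ∧ (A * B) ^ 2 ^ (n - 1) = C ^ e₃ ∧ C ^ 2 ^ m = 1 ∧
        Commute A C ∧ Commute B C := by
  simp [rels, a, b, c, mul_inv_eq_one, commutatorElement_eq_one_iff_commute]

theorem closure_presentedGroup_of (rels : Set (FreeGroup (Fin 3))) :
    closure {(PresentedGroup.of 0 : PresentedGroup rels), .of 1, .of 2} = ⊤ := by
  rw [← PresentedGroup.closure_range_of]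
  congr
  ext
  simp [Fin.exists_fin_succ, eq_comm]

theorem lift_presentedGroup_of_eq_one {rels : Set (FreeGroup (Fin 3))} {r : FreeGroup (Fin 3)}
    (hr : r ∈ rels) :
    FreeGroup.lift ![(PresentedGroup.of 0 : PresentedGroup rels), .of 1, .of 2] r = 1 := by
  rw [← FreeGroup.lift_unique (PresentedGroup.mk rels) (fun i => by fin_cases i <;> rfl)]
  exact PresentedGroup.one_of_mem hr

theorem nonempty_mulEquiv_presentedGroup_rels {G : Type*} [Group G] [Finite G] {A B C : G}
    {m n e₁ e₂ e₃ : ℕ} (hcard : Nat.card G = 2 * 2 ^ (n - 1) * 2 ^ m)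
    (hgen : closure {A, B, C} = ⊤)
    (hrels : ∀ r ∈ rels m n e₁ e₂ e₃, FreeGroup.lift ![A, B, C] r = 1) :
    Nonempty (G ≃* PresentedGroup (rels m n e₁ e₂ e₃)) := by
  set f := PresentedGroup.toGroup hrels
  have hsurj : Function.Surjective f := by
    rw [← MonoidHom.range_eq_top, eq_top_iff, ← hgen, closure_le]
    rintro _ (rfl | rfl | rfl)
    exacts [⟨.of 0, PresentedGroup.toGroup.of hrels⟩, ⟨.of 1, PresentedGroup.toGroup.of hrels⟩,
      ⟨.of 2, PresentedGroup.toGroup.of hrels⟩]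
  have hdvd : Nat.card (PresentedGroup (rels m n e₁ e₂ e₃)) ∣ Nat.card G := by
    obtain ⟨h₁, h₂, h₃, h₄, hA, hB⟩ :=
      lift_rels_eq_one_iff.mp fun r hr => lift_presentedGroup_of_eq_one hr
    rw [hcard]
    exact card_dvd_of_closure_eq_top (closure_presentedGroup_of _) h₁ h₂ h₃ h₄ hA hB
  have : Finite (PresentedGroup (rels m n e₁ e₂ e₃)) :=
    Nat.finite_of_card_ne_zero (ne_zero_of_dvd_ne_zero Nat.card_pos.ne' hdvd)
  exact ⟨(MulEquiv.ofBijective f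
    (hsurj.bijective_of_nat_card_le (Nat.le_of_dvd Nat.card_pos hdvd))).symm⟩

theorem two_mul_two_pow_sub_two {n : ℕ} (hn : 2 ≤ n) : 2 * 2 ^ (n - 2) = 2 ^ (n - 1) := by
  rw [← pow_succ']
  congr 1
  omega

section Classification

variable {G : Type*} [Group G] {m n e₁ e₂ : ℕ} {z A B : G}

theorem mul_pow_two_pow_pred_eq (hn : 2 ≤ n) (hZ : center G = zpowers z)
    (hz : orderOf z = 2 ^ m) (hq : Nat.card (G ⧸ center G) = 2 ^ n)
    (hgen : closure {(A : G ⧸ center G), (B : G ⧸ center G)} = ⊤) (h₁ : A ^ 2 = z ^ e₁)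
    (h₂ : B ^ 2 = z ^ e₂) :
    (A * B) ^ 2 ^ (n - 1) = z ^ (2 ^ (m - 1) + (e₁ + e₂) * 2 ^ (n - 2)) := by
  have hzc : z ∈ center G := hZ ▸ mem_zpowers z
  have hA : A ^ 2 ∈ center G := h₁ ▸ pow_mem hzc e₁
  have hB : B ^ 2 ∈ center G := h₂ ▸ pow_mem hzc e₂
  have : Finite (G ⧸ center G) := Nat.finite_of_card_ne_zero (by simp [hq])
  have : Nontrivial (G ⧸ center G) :=
    Finite.one_lt_card_iff_nontrivial.mp (by rw [hq]; exact Nat.one_lt_two_pow (by omega))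
  have hord : orderOf ((A : G ⧸ center G) * B) = 2 * 2 ^ (n - 2) := by
    rw [orderOf_mul_eq_two_pow_pred hq not_isCyclic_quotient_center
      (by rw [← QuotientGroup.mk_pow, (QuotientGroup.eq_one_iff _).mpr hA])
      (by rw [← QuotientGroup.mk_pow, (QuotientGroup.eq_one_iff _).mpr hB]) hgen,
      two_mul_two_pow_sub_two hn]
  obtain ⟨hv, hv2⟩ := mul_pow_mul_inv_mem_center_and_orderOf_eq_two hA hB hgen (by positivity) hord
  have := eq_pow_two_pow_pred_of_orderOf_eq_two hz (hZ ▸ hv) hv2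
  rwa [mul_inv_eq_iff_eq_mul, h₁, h₂, two_mul_two_pow_sub_two hn, ← pow_add, ← pow_mul,
    ← pow_add] at this

theorem nonempty_mulEquiv_presentedGroup_rels_of_sq_eq [Finite G] {e₃ : ℕ} (hn : 2 ≤ n)
    (hZ : center G = zpowers z) (hz : orderOf z = 2 ^ m) (hq : Nat.card (G ⧸ center G) = 2 ^ n)
    (hgen : closure {(A : G ⧸ center G), (B : G ⧸ center G)} = ⊤) (h₁ : A ^ 2 = z ^ e₁)
    (h₂ : B ^ 2 = z ^ e₂) (he₃ : 2 ^ (m - 1) + (e₁ + e₂) * 2 ^ (n - 2) = e₃) :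
    Nonempty (G ≃* PresentedGroup (rels m n e₁ e₂ e₃)) := by
  have hzc : z ∈ center G := hZ ▸ mem_zpowers z
  have hcard : Nat.card G = 2 * 2 ^ (n - 1) * 2 ^ m := by
    rw [card_eq_card_quotient_mul_card_subgroup (center G), hq, hZ, Nat.card_zpowers, hz,
      mul_pow_sub_one (by omega)]
  have hgen' : closure {A, B, z} = ⊤ := by
    rw [show ({A, B, z} : Set G) = {A, B} ∪ {z} by rw [Set.insert_union, Set.singleton_union],
      Subgroup.closure_union, ← zpowers_eq_closure, ← hZ, closure_pair_sup_center_eq_top hgen]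
  exact nonempty_mulEquiv_presentedGroup_rels hcard hgen' (lift_rels_eq_one_iff.mpr
    ⟨h₁, h₂, he₃ ▸ mul_pow_two_pow_pred_eq hn hZ hz hq hgen h₁ h₂, hz ▸ pow_orderOf_eq_one z,
      mem_center_iff.mp hzc A, mem_center_iff.mp hzc B⟩)

end Classification

theorem trichotomy_cyclic_center_dihedral_quotient_general
    (G : Type) [Group G] [Finite G] (m n : ℕ)
    (hn : 2 ≤ n)
    (hcyc : IsCyclic (Subgroup.center G))
    (hZ : Nat.card ↥(Subgroup.center G) = 2 ^ m)
    (hq : Nat.card (G ⧸ Subgroup.center G) = 2 ^ n)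
    (hdih : ∃ x y : G ⧸ Subgroup.center G,
        orderOf x = 2 ∧ orderOf y = 2 ∧ Subgroup.closure {x, y} = ⊤) :
    Nonempty (G ≃* PresentedGroup (relsD m n)) ∨
      Nonempty (G ≃* PresentedGroup (relsQ m n)) ∨
        Nonempty (G ≃* PresentedGroup (relsS m n)) := by
  obtain ⟨z, hcenter⟩ := (center G).isCyclic_iff_exists_zpowers_eq_top.mp hcyc
  replace hcenter := hcenter.symm
  have hz : orderOf z = 2 ^ m := by rw [← Nat.card_zpowers, ← hcenter, hZ]
  obtain ⟨x, y, hx, hy, hxy⟩ := hdih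
  obtain ⟨A, e₁, rfl, he₁, hA⟩ :=
    exists_mk_eq_and_sq_eq_pow hcenter x (hx ▸ pow_orderOf_eq_one x)
  obtain ⟨B, e₂, rfl, he₂, hB⟩ :=
    exists_mk_eq_and_sq_eq_pow hcenter y (hy ▸ pow_orderOf_eq_one y)
  interval_cases e₁ <;> interval_cases e₂
  · left
    rw [relsD_eq]
    exact nonempty_mulEquiv_presentedGroup_rels_of_sq_eq hn hcenter hz hq hxy hA hB (by simp)
  · right; right
    rw [relsS_eq]
    exact nonempty_mulEquiv_presentedGroup_rels_of_sq_eq hn hcenter hz hq hxy hA hB (by simp)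
  · right; right
    rw [relsS_eq]
    exact nonempty_mulEquiv_presentedGroup_rels_of_sq_eq hn hcenter hz hq
      (Set.pair_comm (B : G ⧸ center G) A ▸ hxy) hB hA (by simp)
  · right; left
    rw [relsQ_eq]
    exact nonempty_mulEquiv_presentedGroup_rels_of_sq_eq hn hcenter hz hq hxy hA hB
      (by rw [← two_mul_two_pow_sub_two hn])

theorem trichotomy_cyclic_center_dihedral_quotient
    (G : Type) [Group G] [Finite G] (hG : IsPGroup 2 G) (m n : ℕ)
    (hm : 1 ≤ m) (hn : 2 ≤ n)
    (hcyc : IsCyclic (Subgroup.center G))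
    (hZ : Nat.card ↥(Subgroup.center G) = 2 ^ m)
    (hq : Nat.card (G ⧸ Subgroup.center G) = 2 ^ n)
    (hdih : ∃ x y : G ⧸ Subgroup.center G,
        orderOf x = 2 ∧ orderOf y = 2 ∧ Subgroup.closure {x, y} = ⊤) :
    Nonempty (G ≃* PresentedGroup (relsD m n)) ∨
      Nonempty (G ≃* PresentedGroup (relsQ m n)) ∨
        Nonempty (G ≃* PresentedGroup (relsS m n)) :=
  trichotomy_cyclic_center_dihedral_quotient_general G m n hn hcyc hZ hq hdih

end MIP
end
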